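/- arXiv:1103.5687 — 9 statements merged into one kernel-verified Lean document; each statement's English description precedes it below -/
import Mathlib

section
/- Let m, n ≥ 1, let Ω ⊆ ℝ^m be open, let f : Ω → (0,∞) be smooth, and let φ = (φ¹,…,φⁿ) : Ω → ℝ^n be a smooth map. If φ is an f-harmonic morphism (i.e., for every harmonic function u : V → ℝ on an open set V ⊆ ℝ^n with φ⁻¹(V) nonempty, u∘φ is f-harmonic on φ⁻¹(V)), then φ is horizontally weakly conformal — there exists a function λ : Ω → [0,∞) such that ⟨∇φ^α(x), ∇φ^β(x)⟩ = λ(x)²·δ^{αβ} for all x ∈ Ω and all 1 ≤ α, β ≤ n — and φ is an f-harmonic map, i.e., f·Δφ^α + ⟨∇f, ∇φ^α⟩ = 0 on Ω for every α. -/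
open scoped RealInnerProductSpace

/-- The Euclidean Laplacian of a real-valued function on `ℝ^m`. -/
noncomputable def lap {m : ℕ} (u : EuclideanSpace ℝ (Fin m) → ℝ)
    (x : EuclideanSpace ℝ (Fin m)) : ℝ :=
  ∑ i : Fin m, fderiv ℝ (fun y => fderiv ℝ u y (EuclideanSpace.single i 1)) x
    (EuclideanSpace.single i 1)

section Aux

variable {m n : ℕ} {Ω : Set (EuclideanSpace ℝ (Fin m))}
  {g h : EuclideanSpace ℝ (Fin m) → ℝ} {x : EuclideanSpace ℝ (Fin m)}

private lemma grad_apply' (g : EuclideanSpace ℝ (Fin m) → ℝ) (x v : EuclideanSpace ℝ (Fin m)) :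
    ⟪gradient g x, v⟫ = fderiv ℝ g x v := by
  rw [gradient, InnerProductSpace.toDual_symm_apply]

private lemma inner_grad_grad (g h : EuclideanSpace ℝ (Fin m) → ℝ) (x : EuclideanSpace ℝ (Fin m)) :
    ⟪gradient g x, gradient h x⟫ =
      ∑ i : Fin m, fderiv ℝ g x (EuclideanSpace.single i 1) *
        fderiv ℝ h x (EuclideanSpace.single i 1) := by
  rw [PiLp.inner_apply]
  refine Finset.sum_congr rfl fun i _ => ?_
  have hg : gradient g x i = fderiv ℝ g x (EuclideanSpace.single i 1) := by
    rw [← grad_apply', PiLp.inner_apply]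
    simp [EuclideanSpace.single_apply]
  have hh : gradient h x i = fderiv ℝ h x (EuclideanSpace.single i 1) := by
    rw [← grad_apply', PiLp.inner_apply]
    simp [EuclideanSpace.single_apply]
  simp [RCLike.inner_apply, hg, hh]
  ring

private lemma diffat (hΩ : IsOpen Ω) (hg : ContDiffOn ℝ (⊤ : ℕ∞) g Ω) (hx : x ∈ Ω) :
    DifferentiableAt ℝ g x :=
  (hg.contDiffAt (hΩ.mem_nhds hx)).differentiableAt (by simp)

private lemma fderiv_diffat (hΩ : IsOpen Ω) (hg : ContDiffOn ℝ (⊤ : ℕ∞) g Ω) (hx : x ∈ Ω)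
    (v : EuclideanSpace ℝ (Fin m)) :
    DifferentiableAt ℝ (fun y => fderiv ℝ g y v) x := by
  have h1 : ContDiffOn ℝ (⊤ : ℕ∞) (fun y => fderiv ℝ g y) Ω := hg.fderiv_of_isOpen hΩ (by simp)
  have h2 : ContDiffOn ℝ (⊤ : ℕ∞) (fun y => fderiv ℝ g y v) Ω := h1.clm_apply contDiffOn_const
  exact (h2.contDiffAt (hΩ.mem_nhds hx)).differentiableAt (by simp)

private lemma lap_mul (hΩ : IsOpen Ω) (hg : ContDiffOn ℝ (⊤ : ℕ∞) g Ω) (hh : ContDiffOn ℝ (⊤ : ℕ∞) h Ω)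
    (hx : x ∈ Ω) :
    lap (fun y => g y * h y) x = g x * lap h x + h x * lap g x +
      2 * ∑ i : Fin m, fderiv ℝ g x (EuclideanSpace.single i 1) *
        fderiv ℝ h x (EuclideanSpace.single i 1) := by
  unfold lap
  have key : ∀ i : Fin m,
      fderiv ℝ (fun y => fderiv ℝ (fun z => g z * h z) y (EuclideanSpace.single i 1)) x
        (EuclideanSpace.single i 1)
      = g x * fderiv ℝ (fun y => fderiv ℝ h y (EuclideanSpace.single i 1)) x
          (EuclideanSpace.single i 1)
        + h x * fderiv ℝ (fun y => fderiv ℝ g y (EuclideanSpace.single i 1)) x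
          (EuclideanSpace.single i 1)
        + 2 * (fderiv ℝ g x (EuclideanSpace.single i 1) *
            fderiv ℝ h x (EuclideanSpace.single i 1)) := by
    intro i
    set v := EuclideanSpace.single i (1:ℝ)
    have heq : (fun y => fderiv ℝ (fun z => g z * h z) y v)
        =ᶠ[nhds x] (fun y => g y * fderiv ℝ h y v + h y * fderiv ℝ g y v) := by
      filter_upwards [hΩ.mem_nhds hx] with y hy
      rw [fderiv_fun_mul (diffat hΩ hg hy) (diffat hΩ hh hy)]
      simp
    rw [heq.fderiv_eq]
    have d1 := diffat hΩ hg hx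
    have d2 := diffat hΩ hh hx
    have d3 := fderiv_diffat hΩ hg hx v
    have d4 := fderiv_diffat hΩ hh hx v
    rw [fderiv_fun_add (show DifferentiableAt ℝ (fun y => g y * fderiv ℝ h y v) x from d1.mul d4)
      (show DifferentiableAt ℝ (fun y => h y * fderiv ℝ g y v) x from d2.mul d3), fderiv_fun_mul d1 d4, fderiv_fun_mul d2 d3]
    simp only [ContinuousLinearMap.add_apply, ContinuousLinearMap.smul_apply, smul_eq_mul]
    ring
  simp only [key]
  rw [Finset.sum_add_distrib, Finset.sum_add_distrib, ← Finset.mul_sum, ← Finset.mul_sum,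
    ← Finset.mul_sum]

private lemma lap_sub (hΩ : IsOpen Ω) (hg : ContDiffOn ℝ (⊤ : ℕ∞) g Ω) (hh : ContDiffOn ℝ (⊤ : ℕ∞) h Ω)
    (hx : x ∈ Ω) :
    lap (fun y => g y - h y) x = lap g x - lap h x := by
  unfold lap
  rw [← Finset.sum_sub_distrib]
  refine Finset.sum_congr rfl fun i _ => ?_
  set v := EuclideanSpace.single i (1:ℝ)
  have heq : (fun y => fderiv ℝ (fun z => g z - h z) y v)
      =ᶠ[nhds x] (fun y => fderiv ℝ g y v - fderiv ℝ h y v) := by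
    filter_upwards [hΩ.mem_nhds hx] with y hy
    rw [fderiv_fun_sub (diffat hΩ hg hy) (diffat hΩ hh hy)]
    simp
  rw [heq.fderiv_eq, fderiv_fun_sub (fderiv_diffat hΩ hg hx v) (fderiv_diffat hΩ hh hx v)]
  simp

private lemma grad_mul (hg : DifferentiableAt ℝ g x) (hh : DifferentiableAt ℝ h x) :
    gradient (fun y => g y * h y) x = g x • gradient h x + h x • gradient g x := by
  unfold gradient
  rw [fderiv_fun_mul hg hh, map_add, map_smul, map_smul]

private lemma grad_sub (hg : DifferentiableAt ℝ g x) (hh : DifferentiableAt ℝ h x) :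
    gradient (fun y => g y - h y) x = gradient g x - gradient h x := by
  unfold gradient
  rw [fderiv_fun_sub hg hh, map_sub]

private lemma fderiv_coord (α : Fin n) (y : EuclideanSpace ℝ (Fin n)) :
    fderiv ℝ (fun z : EuclideanSpace ℝ (Fin n) => z α) y = EuclideanSpace.proj α := by
  have : (fun z : EuclideanSpace ℝ (Fin n) => z α) = ⇑(EuclideanSpace.proj (𝕜 := ℝ) α) := rfl
  rw [this, ContinuousLinearMap.fderiv]

private lemma lap_coord (α : Fin n) (y : EuclideanSpace ℝ (Fin n)) :
    lap (fun z : EuclideanSpace ℝ (Fin n) => z α) y = 0 := by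
  unfold lap
  refine Finset.sum_eq_zero fun i _ => ?_
  simp only [fderiv_coord]
  rw [fderiv_const_apply]
  simp

private lemma contdiff_coord (α : Fin n) :
    ContDiff ℝ (⊤ : ℕ∞) (fun z : EuclideanSpace ℝ (Fin n) => z α) :=
  (EuclideanSpace.proj (𝕜 := ℝ) α).contDiff

private lemma lap_coord_mul (α β : Fin n) (y : EuclideanSpace ℝ (Fin n)) :
    lap (fun z : EuclideanSpace ℝ (Fin n) => z α * z β) y =
      2 * (if α = β then 1 else 0) := by
  unfold lap
  have key : ∀ i : Fin n, ∀ w : EuclideanSpace ℝ (Fin n),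
      fderiv ℝ (fun z : EuclideanSpace ℝ (Fin n) => z α * z β) w (EuclideanSpace.single i 1)
      = w α * (EuclideanSpace.single i (1:ℝ)) β + w β * (EuclideanSpace.single i (1:ℝ)) α := by
    intro i w
    rw [fderiv_fun_mul ((contdiff_coord α).differentiable (by simp) w)
      ((contdiff_coord β).differentiable (by simp) w)]
    simp only [ContinuousLinearMap.add_apply, ContinuousLinearMap.smul_apply, smul_eq_mul,
      fderiv_coord, PiLp.proj_apply]
  have key2 : ∀ i : Fin n,
      fderiv ℝ (fun w => fderiv ℝ (fun z : EuclideanSpace ℝ (Fin n) => z α * z β) w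
        (EuclideanSpace.single i 1)) y (EuclideanSpace.single i 1)
      = 2 * ((EuclideanSpace.single i (1:ℝ)) α * (EuclideanSpace.single i (1:ℝ)) β) := by
    intro i
    have : (fun w => fderiv ℝ (fun z : EuclideanSpace ℝ (Fin n) => z α * z β) w
        (EuclideanSpace.single i 1))
        = fun w : EuclideanSpace ℝ (Fin n) =>
            w α * (EuclideanSpace.single i (1:ℝ)) β +
            w β * (EuclideanSpace.single i (1:ℝ)) α := by
      funext w; exact key i w
    rw [this]
    have dα := ((contdiff_coord (n := n) α).differentiable (by simp) y).mul_const
      ((EuclideanSpace.single i (1:ℝ)) β)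
    have dβ := ((contdiff_coord (n := n) β).differentiable (by simp) y).mul_const
      ((EuclideanSpace.single i (1:ℝ)) α)
    rw [fderiv_fun_add dα dβ, fderiv_mul_const ((contdiff_coord (n := n) α).differentiable (by simp) y),
      fderiv_mul_const ((contdiff_coord (n := n) β).differentiable (by simp) y)]
    simp only [ContinuousLinearMap.add_apply, ContinuousLinearMap.smul_apply, smul_eq_mul,
      fderiv_coord, PiLp.proj_apply]
    ring
  simp only [key2, EuclideanSpace.single_apply]
  by_cases hab : α = β
  · subst hab
    simp [Finset.sum_ite_eq']
  · rw [if_neg hab, mul_zero, Finset.sum_eq_zero]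
    intro i _
    by_cases h1 : β = i
    · rw [if_pos h1, if_neg (fun h2 : α = i => hab (h2.trans h1.symm))]; ring
    · rw [if_neg h1]; ring

/-- The key identity: the `f`-harmonic operator applied to a product. -/
private lemma fharm_mul (hΩ : IsOpen Ω) (f : EuclideanSpace ℝ (Fin m) → ℝ)
    (hg : ContDiffOn ℝ (⊤ : ℕ∞) g Ω) (hh : ContDiffOn ℝ (⊤ : ℕ∞) h Ω) (hx : x ∈ Ω) :
    f x * lap (fun y => g y * h y) x + ⟪gradient f x, gradient (fun y => g y * h y) x⟫
    = g x * (f x * lap h x + ⟪gradient f x, gradient h x⟫)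
      + h x * (f x * lap g x + ⟪gradient f x, gradient g x⟫)
      + 2 * f x * ⟪gradient g x, gradient h x⟫ := by
  rw [lap_mul hΩ hg hh hx, grad_mul (diffat hΩ hg hx) (diffat hΩ hh hx),
    inner_add_right, real_inner_smul_right, real_inner_smul_right, inner_grad_grad g h]
  ring

end Aux

theorem stmt0 {m n : ℕ} (hm : 1 ≤ m) (hn : 1 ≤ n)
    (Ω : Set (EuclideanSpace ℝ (Fin m))) (hΩ : IsOpen Ω)
    (f : EuclideanSpace ℝ (Fin m) → ℝ) (hf : ContDiffOn ℝ (⊤ : ℕ∞) f Ω)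
    (hfpos : ∀ x ∈ Ω, 0 < f x)
    (φ : EuclideanSpace ℝ (Fin m) → EuclideanSpace ℝ (Fin n))
    (hφ : ContDiffOn ℝ (⊤ : ℕ∞) φ Ω)
    -- `φ` is an `f`-harmonic morphism: it pulls back harmonic functions to
    -- `f`-harmonic functions
    (hmor : ∀ V : Set (EuclideanSpace ℝ (Fin n)), IsOpen V →
      ∀ u : EuclideanSpace ℝ (Fin n) → ℝ, ContDiffOn ℝ 2 u V →
      (∀ y ∈ V, lap u y = 0) →
      (Ω ∩ φ ⁻¹' V).Nonempty →
      ∀ x ∈ Ω ∩ φ ⁻¹' V,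
        f x * lap (fun y => u (φ y)) x +
          ⟪gradient f x, gradient (fun y => u (φ y)) x⟫ = 0) :
    -- `φ` is horizontally weakly conformal ...
    (∃ lam : EuclideanSpace ℝ (Fin m) → ℝ, (∀ x ∈ Ω, 0 ≤ lam x) ∧
      ∀ x ∈ Ω, ∀ α β : Fin n,
        ⟪gradient (fun y => φ y α) x, gradient (fun y => φ y β) x⟫ =
          lam x ^ 2 * (if α = β then 1 else 0)) ∧
    -- ... and an `f`-harmonic map
    (∀ α : Fin n, ∀ x ∈ Ω,
      f x * lap (fun y => φ y α) x +
        ⟪gradient f x, gradient (fun y => φ y α) x⟫ = 0) := by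
  rcases Set.eq_empty_or_nonempty Ω with hE | hne
  · refine ⟨⟨fun _ => 0, fun x hx => absurd (hE ▸ hx) (Set.notMem_empty x),
      fun x hx => absurd (hE ▸ hx) (Set.notMem_empty x)⟩,
      fun α x hx => absurd (hE ▸ hx) (Set.notMem_empty x)⟩
  have hpre : (Ω ∩ φ ⁻¹' Set.univ).Nonempty := by simpa using hne
  -- smoothness of the components of φ
  have comp : ∀ α : Fin n, ContDiffOn ℝ (⊤ : ℕ∞) (fun y => φ y α) Ω := fun α =>
    (contdiff_coord α).comp_contDiffOn hφ
  -- φ is an f-harmonic map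
  have harm : ∀ α : Fin n, ∀ x ∈ Ω,
      f x * lap (fun y => φ y α) x +
        ⟪gradient f x, gradient (fun y => φ y α) x⟫ = 0 := by
    intro α x hx
    exact hmor Set.univ isOpen_univ (fun z => z α)
      ((contdiff_coord α).of_le (WithTop.coe_le_coe.mpr le_top)).contDiffOn
      (fun y _ => lap_coord α y) hpre x ⟨hx, trivial⟩
  -- orthogonality of gradients of distinct components
  have orth : ∀ x ∈ Ω, ∀ α β : Fin n, α ≠ β →
      ⟪gradient (fun y => φ y α) x, gradient (fun y => φ y β) x⟫ = 0 := by
    intro x hx α β hab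
    have hu : ContDiffOn ℝ 2 (fun z : EuclideanSpace ℝ (Fin n) => z α * z β) Set.univ :=
      (((contdiff_coord α).mul (contdiff_coord β)).of_le (WithTop.coe_le_coe.mpr le_top)).contDiffOn
    have hlapu : ∀ y ∈ Set.univ, lap (fun z : EuclideanSpace ℝ (Fin n) => z α * z β) y = 0 := by
      intro y _
      rw [lap_coord_mul, if_neg hab, mul_zero]
    have h0 : f x * lap (fun y => φ y α * φ y β) x +
        ⟪gradient f x, gradient (fun y => φ y α * φ y β) x⟫ = 0 :=
      hmor Set.univ isOpen_univ _ hu hlapu hpre x ⟨hx, trivial⟩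
    rw [fharm_mul hΩ f (comp α) (comp β) hx, harm α x hx, harm β x hx] at h0
    have hf0 := (hfpos x hx).ne'
    have : 2 * f x * ⟪gradient (fun y => φ y α) x, gradient (fun y => φ y β) x⟫ = 0 := by
      linarith
    rcases mul_eq_zero.mp this with h | h
    · exact absurd h (show (0:ℝ) < 2 * f x by have := hfpos x hx; linarith).ne'
    · exact h
  -- equality of norms of gradients of components
  have normeq : ∀ x ∈ Ω, ∀ α β : Fin n,
      ⟪gradient (fun y => φ y α) x, gradient (fun y => φ y α) x⟫ =
      ⟪gradient (fun y => φ y β) x, gradient (fun y => φ y β) x⟫ := by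
    intro x hx α β
    have hu : ContDiffOn ℝ 2 (fun z : EuclideanSpace ℝ (Fin n) => z α * z α - z β * z β)
        Set.univ :=
      ((((contdiff_coord α).mul (contdiff_coord α)).sub
        ((contdiff_coord β).mul (contdiff_coord β))).of_le (WithTop.coe_le_coe.mpr le_top)).contDiffOn
    have hlapu : ∀ y ∈ Set.univ,
        lap (fun z : EuclideanSpace ℝ (Fin n) => z α * z α - z β * z β) y = 0 := by
      intro y _
      rw [lap_sub isOpen_univ
        (((contdiff_coord α).mul (contdiff_coord α)).contDiffOn)
        (((contdiff_coord β).mul (contdiff_coord β)).contDiffOn) trivial,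
        lap_coord_mul, lap_coord_mul]
      simp
    have h0 : f x * lap (fun y => φ y α * φ y α - φ y β * φ y β) x +
        ⟪gradient f x, gradient (fun y => φ y α * φ y α - φ y β * φ y β) x⟫ = 0 :=
      hmor Set.univ isOpen_univ _ hu hlapu hpre x ⟨hx, trivial⟩
    have hgα : ContDiffOn ℝ (⊤ : ℕ∞) (fun y => φ y α * φ y α) Ω := (comp α).mul (comp α)
    have hgβ : ContDiffOn ℝ (⊤ : ℕ∞) (fun y => φ y β * φ y β) Ω := (comp β).mul (comp β)
    rw [lap_sub hΩ hgα hgβ hx, grad_sub (diffat hΩ hgα hx) (diffat hΩ hgβ hx),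
      inner_sub_right] at h0
    have e1 := fharm_mul (g := fun y => φ y α) (h := fun y => φ y α) hΩ f (comp α) (comp α) hx
    have e2 := fharm_mul (g := fun y => φ y β) (h := fun y => φ y β) hΩ f (comp β) (comp β) hx
    rw [harm α x hx] at e1
    rw [harm β x hx] at e2
    have h0' : 2 * f x *
        (⟪gradient (fun y => φ y α) x, gradient (fun y => φ y α) x⟫ -
         ⟪gradient (fun y => φ y β) x, gradient (fun y => φ y β) x⟫) = 0 := by
      have expand : f x * (lap (fun y => φ y α * φ y α) x - lap (fun y => φ y β * φ y β) x) +
          (⟪gradient f x, gradient (fun y => φ y α * φ y α) x⟫ -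
           ⟪gradient f x, gradient (fun y => φ y β * φ y β) x⟫)
        = (f x * lap (fun y => φ y α * φ y α) x +
            ⟪gradient f x, gradient (fun y => φ y α * φ y α) x⟫) -
          (f x * lap (fun y => φ y β * φ y β) x +
            ⟪gradient f x, gradient (fun y => φ y β * φ y β) x⟫) := by ring
      rw [expand, e1, e2] at h0
      linarith
    rcases mul_eq_zero.mp h0' with h | h
    · exact absurd h (show (0:ℝ) < 2 * f x by have := hfpos x hx; linarith).ne'
    · linarith
  have hfirst : ∃ lam : EuclideanSpace ℝ (Fin m) → ℝ, (∀ x ∈ Ω, 0 ≤ lam x) ∧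
      ∀ x ∈ Ω, ∀ α β : Fin n,
        ⟪gradient (fun y => φ y α) x, gradient (fun y => φ y β) x⟫ =
          lam x ^ 2 * (if α = β then 1 else 0) := by
    set α0 : Fin n := ⟨0, hn⟩
    refine ⟨fun x => ‖gradient (fun y => φ y α0) x‖, fun x _ => norm_nonneg _, ?_⟩
    intro x hx α β
    by_cases hab : α = β
    · subst hab
      rw [if_pos rfl, mul_one, normeq x hx α α0, real_inner_self_eq_norm_sq]
    · rw [if_neg hab, mul_zero, orth x hx α β hab]
  exact ⟨hfirst, harm⟩
end

section
/- Let m, n ≥ 1, let Ω ⊆ ℝ^m be open, let f : Ω → (0,∞) be smooth, and let φ = (φ¹,…,φⁿ) : Ω → ℝ^n be a smooth map which is horizontally weakly conformal with dilation λ : Ω → [0,∞) (i.e., ⟨∇φ^α, ∇φ^β⟩ = λ²·δ^{αβ} for all 1 ≤ α, β ≤ n) and which is an f-harmonic map (f·Δφ^α + ⟨∇f, ∇φ^α⟩ = 0 for all α). Then for every C² function u : V → ℝ on an open set V ⊆ ℝ^n one has, at every point of φ⁻¹(V): f·Δ(u∘φ) + ⟨∇f, ∇(u∘φ)⟩ =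 f·λ²·(Δu)∘φ. In particular, φ pulls back every harmonic function on V to an f-harmonic function on φ⁻¹(V), i.e., φ is an f-harmonic morphism. -/
open scoped RealInnerProductSpace

variable {k l : ℕ}


lemma eucl_sum (w : EuclideanSpace ℝ (Fin k)) :
    w = ∑ i : Fin k, w i • EuclideanSpace.single i (1:ℝ) := by
  ext j
  rw [WithLp.ofLp_sum, Finset.sum_apply]
  simp [EuclideanSpace.single_apply, Finset.sum_ite_eq', mul_comm]

lemma clm_decomp {G : Type*} [NormedAddCommGroup G] [NormedSpace ℝ G]
    (L : EuclideanSpace ℝ (Fin k) →L[ℝ] G) (w : EuclideanSpace ℝ (Fin k)) :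
    L w = ∑ i : Fin k, w i • L (EuclideanSpace.single i 1) := by
  conv_lhs => rw [eucl_sum w]
  simp

lemma fderiv_fderiv_apply {u : EuclideanSpace ℝ (Fin k) → ℝ} {z : EuclideanSpace ℝ (Fin k)}
    (h : DifferentiableAt ℝ (fderiv ℝ u) z) (v w : EuclideanSpace ℝ (Fin k)) :
    fderiv ℝ (fun y => fderiv ℝ u y v) z w = fderiv ℝ (fderiv ℝ u) z w v := by
  rw [fderiv_clm_apply h (differentiableAt_const v)]
  simp

lemma fderiv_comp_clm {φ : EuclideanSpace ℝ (Fin k) → EuclideanSpace ℝ (Fin l)}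
    {y : EuclideanSpace ℝ (Fin k)} (hφ : DifferentiableAt ℝ φ y) (α : Fin l) :
    fderiv ℝ (fun z => φ z α) y = (EuclideanSpace.proj α).comp (fderiv ℝ φ y) := by
  have : (fun z => φ z α) = (EuclideanSpace.proj (𝕜 := ℝ) α) ∘ φ := rfl
  rw [this, fderiv_comp y (EuclideanSpace.proj α).differentiableAt hφ,
    ContinuousLinearMap.fderiv]

lemma lap_comp
    (Ω : Set (EuclideanSpace ℝ (Fin k))) (hΩ : IsOpen Ω)
    (φ : EuclideanSpace ℝ (Fin k) → EuclideanSpace ℝ (Fin l))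
    (hφ : ContDiffOn ℝ (⊤ : ℕ∞) φ Ω)
    (V : Set (EuclideanSpace ℝ (Fin l))) (hV : IsOpen V)
    (u : EuclideanSpace ℝ (Fin l) → ℝ) (hu : ContDiffOn ℝ 2 u V)
    (x : EuclideanSpace ℝ (Fin k)) (hx : x ∈ Ω) (hxV : φ x ∈ V) :
    lap (fun y => u (φ y)) x =
      (∑ α, fderiv ℝ u (φ x) (EuclideanSpace.single α 1) * lap (fun z => φ z α) x) +
      ∑ α, ∑ β, (∑ i : Fin k,
          fderiv ℝ (fun z => φ z α) x (EuclideanSpace.single i 1) *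
          fderiv ℝ (fun z => φ z β) x (EuclideanSpace.single i 1)) *
        fderiv ℝ (fun y => fderiv ℝ u y (EuclideanSpace.single β 1)) (φ x)
          (EuclideanSpace.single α 1) := by
  -- open neighborhood
  have hWopen : IsOpen (Ω ∩ φ ⁻¹' V) :=
    (hφ.continuousOn).isOpen_inter_preimage hΩ hV
  have hxW : x ∈ Ω ∩ φ ⁻¹' V := ⟨hx, hxV⟩
  have hWn : Ω ∩ φ ⁻¹' V ∈ nhds x := hWopen.mem_nhds hxW
  -- differentiability facts
  have hφx : ContDiffAt ℝ (⊤ : ℕ∞) φ x := hφ.contDiffAt (hΩ.mem_nhds hx)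
  have hux : ContDiffAt ℝ 2 u (φ x) := hu.contDiffAt (hV.mem_nhds hxV)
  have hφd : DifferentiableAt ℝ φ x := hφx.differentiableAt (by simp)
  have hud : DifferentiableAt ℝ u (φ x) := hux.differentiableAt (by simp)
  have hu1 : ContDiffAt ℝ 1 (fderiv ℝ u) (φ x) := hux.fderiv_right (by norm_num)
  have hu1d : DifferentiableAt ℝ (fderiv ℝ u) (φ x) := hu1.differentiableAt (by simp)
  have hφ1 : ContDiffAt ℝ 1 (fderiv ℝ φ) x := hφx.fderiv_right (by exact WithTop.coe_le_coe.mpr le_top)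
  have hφ1d : DifferentiableAt ℝ (fderiv ℝ φ) x := hφ1.differentiableAt (by simp)
  have hc : DifferentiableAt ℝ (fun y => fderiv ℝ u (φ y)) x := hu1d.comp x hφd
  -- eventual identity for first derivative of the composition
  have hev : ∀ᶠ y in nhds x, fderiv ℝ (fun z => u (φ z)) y =
      (fderiv ℝ u (φ y)).comp (fderiv ℝ φ y) := by
    filter_upwards [hWn] with y hy
    exact fderiv_comp y ((hu.contDiffAt (hV.mem_nhds hy.2)).differentiableAt (by simp))
      ((hφ.contDiffAt (hΩ.mem_nhds hy.1)).differentiableAt (by simp))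
  -- step 1: expression for each second-derivative term
  have step1 : ∀ i : Fin k,
      fderiv ℝ (fun y => fderiv ℝ (fun z => u (φ z)) y (EuclideanSpace.single i 1)) x
        (EuclideanSpace.single i 1) =
      fderiv ℝ (fderiv ℝ u) (φ x) (fderiv ℝ φ x (EuclideanSpace.single i 1))
        (fderiv ℝ φ x (EuclideanSpace.single i 1)) +
      fderiv ℝ u (φ x)
        (fderiv ℝ (fun y => fderiv ℝ φ y (EuclideanSpace.single i 1)) x
          (EuclideanSpace.single i 1)) := by
    intro i
    have hweq : (fun y => fderiv ℝ (fun z => u (φ z)) y (EuclideanSpace.single i 1)) =ᶠ[nhds x]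
        (fun y => (fderiv ℝ u (φ y)) (fderiv ℝ φ y (EuclideanSpace.single i 1))) := by
      filter_upwards [hev] with y hy
      rw [hy]; rfl
    rw [hweq.fderiv_eq]
    have hw : DifferentiableAt ℝ (fun y => fderiv ℝ φ y (EuclideanSpace.single i 1)) x :=
      hφ1d.clm_apply (differentiableAt_const _)
    rw [fderiv_clm_apply hc hw]
    have h3 : fderiv ℝ (fun y => fderiv ℝ u (φ y)) x =
        (fderiv ℝ (fderiv ℝ u) (φ x)).comp (fderiv ℝ φ x) := fderiv_comp x hu1d hφd
    simp [h3]
    ring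
  -- abbreviations-free computation
  have hcomp : ∀ (α : Fin l) (v : EuclideanSpace ℝ (Fin k)),
      (fderiv ℝ φ x v) α = fderiv ℝ (fun z => φ z α) x v := by
    intro α v
    rw [fderiv_comp_clm hφd]
    rfl
  have hB : ∀ α β : Fin l,
      fderiv ℝ (fderiv ℝ u) (φ x) (EuclideanSpace.single α 1) (EuclideanSpace.single β 1) =
      fderiv ℝ (fun y => fderiv ℝ u y (EuclideanSpace.single β 1)) (φ x)
        (EuclideanSpace.single α 1) :=
    fun α β => (fderiv_fderiv_apply hu1d _ _).symm
  have hBvv : ∀ v : EuclideanSpace ℝ (Fin l),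
      fderiv ℝ (fderiv ℝ u) (φ x) v v = ∑ α, ∑ β, v α * v β *
        fderiv ℝ (fderiv ℝ u) (φ x) (EuclideanSpace.single α 1) (EuclideanSpace.single β 1) := by
    intro v
    rw [clm_decomp (fderiv ℝ (fderiv ℝ u) (φ x)) v, ContinuousLinearMap.sum_apply]
    refine Finset.sum_congr rfl fun α _ => ?_
    rw [ContinuousLinearMap.smul_apply, smul_eq_mul,
      clm_decomp (fderiv ℝ (fderiv ℝ u) (φ x) (EuclideanSpace.single α 1)) v, Finset.mul_sum]
    exact Finset.sum_congr rfl fun β _ => by rw [smul_eq_mul]; ring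
  -- the S i α identity
  have hS : ∀ (i : Fin k) (α : Fin l),
      (fderiv ℝ (fun y => fderiv ℝ φ y (EuclideanSpace.single i 1)) x
        (EuclideanSpace.single i 1)) α =
      fderiv ℝ (fun y => fderiv ℝ (fun z => φ z α) y (EuclideanSpace.single i 1)) x
        (EuclideanSpace.single i 1) := by
    intro i α
    have hw : DifferentiableAt ℝ (fun y => fderiv ℝ φ y (EuclideanSpace.single i 1)) x :=
      hφ1d.clm_apply (differentiableAt_const _)
    have hev2 : (fun y => fderiv ℝ (fun z => φ z α) y (EuclideanSpace.single i 1)) =ᶠ[nhds x]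
        (fun y => EuclideanSpace.proj (𝕜 := ℝ) α (fderiv ℝ φ y (EuclideanSpace.single i 1))) := by
      filter_upwards [hΩ.mem_nhds hx] with y hy
      rw [fderiv_comp_clm ((hφ.contDiffAt (hΩ.mem_nhds hy)).differentiableAt (by simp))]
      rfl
    rw [hev2.fderiv_eq]
    have : (fun y => EuclideanSpace.proj (𝕜 := ℝ) α (fderiv ℝ φ y (EuclideanSpace.single i 1))) =
        (EuclideanSpace.proj (𝕜 := ℝ) α) ∘
          (fun y => fderiv ℝ φ y (EuclideanSpace.single i 1)) := rfl
    rw [this, fderiv_comp x (EuclideanSpace.proj α).differentiableAt hw,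
      ContinuousLinearMap.fderiv]
    rfl
  -- now assemble
  have hlapsplit : lap (fun y => u (φ y)) x =
      (∑ i : Fin k, fderiv ℝ (fderiv ℝ u) (φ x) (fderiv ℝ φ x (EuclideanSpace.single i 1))
        (fderiv ℝ φ x (EuclideanSpace.single i 1))) +
      ∑ i : Fin k, fderiv ℝ u (φ x)
        (fderiv ℝ (fun y => fderiv ℝ φ y (EuclideanSpace.single i 1)) x
          (EuclideanSpace.single i 1)) := by
    rw [lap, Finset.sum_congr rfl fun i _ => step1 i, Finset.sum_add_distrib]
  rw [hlapsplit]
  have hterm2 : (∑ i : Fin k, fderiv ℝ u (φ x)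
        (fderiv ℝ (fun y => fderiv ℝ φ y (EuclideanSpace.single i 1)) x
          (EuclideanSpace.single i 1))) =
      ∑ α, fderiv ℝ u (φ x) (EuclideanSpace.single α 1) * lap (fun z => φ z α) x := by
    calc (∑ i : Fin k, fderiv ℝ u (φ x)
        (fderiv ℝ (fun y => fderiv ℝ φ y (EuclideanSpace.single i 1)) x
          (EuclideanSpace.single i 1)))
        = ∑ i : Fin k, ∑ α, fderiv ℝ u (φ x) (EuclideanSpace.single α 1) *
            fderiv ℝ (fun y => fderiv ℝ (fun z => φ z α) y (EuclideanSpace.single i 1)) x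
              (EuclideanSpace.single i 1) := by
          refine Finset.sum_congr rfl fun i _ => ?_
          rw [clm_decomp (fderiv ℝ u (φ x))]
          exact Finset.sum_congr rfl fun α _ => by rw [smul_eq_mul, hS i α]; ring
      _ = ∑ α, ∑ i : Fin k, fderiv ℝ u (φ x) (EuclideanSpace.single α 1) *
            fderiv ℝ (fun y => fderiv ℝ (fun z => φ z α) y (EuclideanSpace.single i 1)) x
              (EuclideanSpace.single i 1) := Finset.sum_comm
      _ = ∑ α, fderiv ℝ u (φ x) (EuclideanSpace.single α 1) * lap (fun z => φ z α) x := by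
          refine Finset.sum_congr rfl fun α _ => ?_
          rw [lap, Finset.mul_sum]
  have hterm1 : (∑ i : Fin k, fderiv ℝ (fderiv ℝ u) (φ x)
        (fderiv ℝ φ x (EuclideanSpace.single i 1)) (fderiv ℝ φ x (EuclideanSpace.single i 1))) =
      ∑ α, ∑ β, (∑ i : Fin k,
          fderiv ℝ (fun z => φ z α) x (EuclideanSpace.single i 1) *
          fderiv ℝ (fun z => φ z β) x (EuclideanSpace.single i 1)) *
        fderiv ℝ (fun y => fderiv ℝ u y (EuclideanSpace.single β 1)) (φ x)
          (EuclideanSpace.single α 1) := by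
    calc (∑ i : Fin k, fderiv ℝ (fderiv ℝ u) (φ x)
        (fderiv ℝ φ x (EuclideanSpace.single i 1)) (fderiv ℝ φ x (EuclideanSpace.single i 1)))
        = ∑ i : Fin k, ∑ α, ∑ β,
            fderiv ℝ (fun z => φ z α) x (EuclideanSpace.single i 1) *
            fderiv ℝ (fun z => φ z β) x (EuclideanSpace.single i 1) *
            fderiv ℝ (fun y => fderiv ℝ u y (EuclideanSpace.single β 1)) (φ x)
              (EuclideanSpace.single α 1) := by
          refine Finset.sum_congr rfl fun i _ => ?_
          rw [hBvv]
          refine Finset.sum_congr rfl fun α _ => Finset.sum_congr rfl fun β _ => ?_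
          rw [hcomp, hcomp, hB]
      _ = ∑ α, ∑ i : Fin k, ∑ β,
            fderiv ℝ (fun z => φ z α) x (EuclideanSpace.single i 1) *
            fderiv ℝ (fun z => φ z β) x (EuclideanSpace.single i 1) *
            fderiv ℝ (fun y => fderiv ℝ u y (EuclideanSpace.single β 1)) (φ x)
              (EuclideanSpace.single α 1) := Finset.sum_comm
      _ = ∑ α, ∑ β, ∑ i : Fin k,
            fderiv ℝ (fun z => φ z α) x (EuclideanSpace.single i 1) *
            fderiv ℝ (fun z => φ z β) x (EuclideanSpace.single i 1) *
            fderiv ℝ (fun y => fderiv ℝ u y (EuclideanSpace.single β 1)) (φ x)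
              (EuclideanSpace.single α 1) :=
          Finset.sum_congr rfl fun α _ => Finset.sum_comm
      _ = ∑ α, ∑ β, (∑ i : Fin k,
            fderiv ℝ (fun z => φ z α) x (EuclideanSpace.single i 1) *
            fderiv ℝ (fun z => φ z β) x (EuclideanSpace.single i 1)) *
            fderiv ℝ (fun y => fderiv ℝ u y (EuclideanSpace.single β 1)) (φ x)
              (EuclideanSpace.single α 1) := by
          refine Finset.sum_congr rfl fun α _ => Finset.sum_congr rfl fun β _ => ?_
          rw [Finset.sum_mul]
  rw [hterm1, hterm2]
  exact add_comm _ _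





lemma my_inner_grad (g : EuclideanSpace ℝ (Fin k) → ℝ) (x v : EuclideanSpace ℝ (Fin k)) :
    ⟪gradient g x, v⟫ = fderiv ℝ g x v := by
  rw [gradient, InnerProductSpace.toDual_symm_apply]

lemma my_inner_eucl (a b : EuclideanSpace ℝ (Fin k)) : ⟪a, b⟫ = ∑ i, a i * b i := by
  simp [PiLp.inner_apply, mul_comm]

lemma my_grad_coord (g : EuclideanSpace ℝ (Fin k) → ℝ) (x : EuclideanSpace ℝ (Fin k)) (i : Fin k) :
    gradient g x i = fderiv ℝ g x (EuclideanSpace.single i 1) := by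
  rw [← my_inner_grad g x (EuclideanSpace.single i 1), my_inner_eucl]
  simp [EuclideanSpace.single_apply, Finset.sum_ite_eq']

lemma my_grad_inner (g h : EuclideanSpace ℝ (Fin k) → ℝ) (x : EuclideanSpace ℝ (Fin k)) :
    ⟪gradient g x, gradient h x⟫ =
      ∑ i, fderiv ℝ g x (EuclideanSpace.single i 1) * fderiv ℝ h x (EuclideanSpace.single i 1) := by
  rw [my_inner_eucl]
  exact Finset.sum_congr rfl fun i _ => by rw [my_grad_coord, my_grad_coord]

lemma my_fderiv_comp_apply {φ : EuclideanSpace ℝ (Fin k) → EuclideanSpace ℝ (Fin l)}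
    {u : EuclideanSpace ℝ (Fin l) → ℝ} {x : EuclideanSpace ℝ (Fin k)}
    (hφd : DifferentiableAt ℝ φ x) (hud : DifferentiableAt ℝ u (φ x))
    (v : EuclideanSpace ℝ (Fin k)) :
    fderiv ℝ (fun y => u (φ y)) x v =
      ∑ α, fderiv ℝ (fun z => φ z α) x v * fderiv ℝ u (φ x) (EuclideanSpace.single α 1) := by
  have h1 : fderiv ℝ (fun y => u (φ y)) x v = fderiv ℝ u (φ x) (fderiv ℝ φ x v) := by
    rw [show (fun y => u (φ y)) = u ∘ φ from rfl, fderiv_comp x hud hφd]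
    rfl
  rw [h1, clm_decomp (fderiv ℝ u (φ x)) (fderiv ℝ φ x v)]
  refine Finset.sum_congr rfl fun α _ => ?_
  rw [smul_eq_mul]
  congr 1
  rw [fderiv_comp_clm hφd]
  rfl




theorem stmt1 {m n : ℕ} (hm : 1 ≤ m) (hn : 1 ≤ n)
    (Ω : Set (EuclideanSpace ℝ (Fin m))) (hΩ : IsOpen Ω)
    (f : EuclideanSpace ℝ (Fin m) → ℝ) (hf : ContDiffOn ℝ (⊤ : ℕ∞) f Ω)
    (hfpos : ∀ x ∈ Ω, 0 < f x)
    (φ : EuclideanSpace ℝ (Fin m) → EuclideanSpace ℝ (Fin n))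
    (hφ : ContDiffOn ℝ (⊤ : ℕ∞) φ Ω)
    (lam : EuclideanSpace ℝ (Fin m) → ℝ) (hlam : ∀ x ∈ Ω, 0 ≤ lam x)
    -- `φ` is horizontally weakly conformal with dilation `lam`
    (hconf : ∀ x ∈ Ω, ∀ α β : Fin n,
      ⟪gradient (fun y => φ y α) x, gradient (fun y => φ y β) x⟫ =
        lam x ^ 2 * (if α = β then 1 else 0))
    -- `φ` is an `f`-harmonic map
    (hfh : ∀ α : Fin n, ∀ x ∈ Ω,
      f x * lap (fun y => φ y α) x +
        ⟪gradient f x, gradient (fun y => φ y α) x⟫ = 0) :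
    -- the fundamental identity
    (∀ V : Set (EuclideanSpace ℝ (Fin n)), IsOpen V →
      ∀ u : EuclideanSpace ℝ (Fin n) → ℝ, ContDiffOn ℝ 2 u V →
      ∀ x ∈ Ω ∩ φ ⁻¹' V,
        f x * lap (fun y => u (φ y)) x +
          ⟪gradient f x, gradient (fun y => u (φ y)) x⟫ =
        f x * lam x ^ 2 * lap u (φ x)) ∧
    -- in particular, `φ` is an `f`-harmonic morphism
    (∀ V : Set (EuclideanSpace ℝ (Fin n)), IsOpen V →
      ∀ u : EuclideanSpace ℝ (Fin n) → ℝ, ContDiffOn ℝ 2 u V →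
      (∀ y ∈ V, lap u y = 0) →
      (Ω ∩ φ ⁻¹' V).Nonempty →
      ∀ x ∈ Ω ∩ φ ⁻¹' V,
        f x * lap (fun y => u (φ y)) x +
          ⟪gradient f x, gradient (fun y => u (φ y)) x⟫ = 0) := by
  have main : ∀ V : Set (EuclideanSpace ℝ (Fin n)), IsOpen V →
      ∀ u : EuclideanSpace ℝ (Fin n) → ℝ, ContDiffOn ℝ 2 u V →
      ∀ x ∈ Ω ∩ φ ⁻¹' V,
        f x * lap (fun y => u (φ y)) x +
          ⟪gradient f x, gradient (fun y => u (φ y)) x⟫ =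
        f x * lam x ^ 2 * lap u (φ x) := by
    intro V hV u hu x hx
    obtain ⟨hx1, hx2⟩ := hx
    have hφd : DifferentiableAt ℝ φ x :=
      (hφ.contDiffAt (hΩ.mem_nhds hx1)).differentiableAt (by simp)
    have hud : DifferentiableAt ℝ u (φ x) :=
      (hu.contDiffAt (hV.mem_nhds hx2)).differentiableAt (by simp)
    -- the double sum collapses by conformality
    have hdsum : (∑ α, ∑ β, (∑ i : Fin m,
          fderiv ℝ (fun z => φ z α) x (EuclideanSpace.single i 1) *
          fderiv ℝ (fun z => φ z β) x (EuclideanSpace.single i 1)) *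
        fderiv ℝ (fun y => fderiv ℝ u y (EuclideanSpace.single β 1)) (φ x)
          (EuclideanSpace.single α 1)) = lam x ^ 2 * lap u (φ x) := by
      have h1 : ∀ α β : Fin n, (∑ i : Fin m,
          fderiv ℝ (fun z => φ z α) x (EuclideanSpace.single i 1) *
          fderiv ℝ (fun z => φ z β) x (EuclideanSpace.single i 1)) =
          lam x ^ 2 * (if α = β then 1 else 0) := by
        intro α β
        rw [← my_grad_inner]
        exact hconf x hx1 α β
      calc (∑ α, ∑ β, (∑ i : Fin m,
          fderiv ℝ (fun z => φ z α) x (EuclideanSpace.single i 1) *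
          fderiv ℝ (fun z => φ z β) x (EuclideanSpace.single i 1)) *
        fderiv ℝ (fun y => fderiv ℝ u y (EuclideanSpace.single β 1)) (φ x)
          (EuclideanSpace.single α 1))
          = ∑ α, ∑ β, (lam x ^ 2 * (if α = β then 1 else 0)) *
              fderiv ℝ (fun y => fderiv ℝ u y (EuclideanSpace.single β 1)) (φ x)
                (EuclideanSpace.single α 1) :=
            Finset.sum_congr rfl fun α _ => Finset.sum_congr rfl fun β _ => by rw [h1]
        _ = ∑ α, lam x ^ 2 *
              fderiv ℝ (fun y => fderiv ℝ u y (EuclideanSpace.single α 1)) (φ x)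
                (EuclideanSpace.single α 1) := by
            refine Finset.sum_congr rfl fun α _ => ?_
            rw [Finset.sum_eq_single α]
            · simp
            · intro β _ hβ
              simp [Ne.symm hβ]
            · intro h; exact absurd (Finset.mem_univ α) h
        _ = lam x ^ 2 * lap u (φ x) := by rw [lap, Finset.mul_sum]
    -- the gradient term
    have hgradterm : ⟪gradient f x, gradient (fun y => u (φ y)) x⟫ =
        ∑ α, fderiv ℝ u (φ x) (EuclideanSpace.single α 1) *
          ⟪gradient f x, gradient (fun z => φ z α) x⟫ := by
      rw [real_inner_comm, my_inner_grad, my_fderiv_comp_apply hφd hud (gradient f x)]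
      refine Finset.sum_congr rfl fun α _ => ?_
      rw [← my_inner_grad (fun z => φ z α) x (gradient f x), real_inner_comm]
      ring
    rw [lap_comp Ω hΩ φ hφ V hV u hu x hx1 hx2, hdsum, hgradterm]
    have hzero : (∑ α, fderiv ℝ u (φ x) (EuclideanSpace.single α 1) *
        (f x * lap (fun z => φ z α) x + ⟪gradient f x, gradient (fun z => φ z α) x⟫)) = 0 :=
      Finset.sum_eq_zero fun α _ => by rw [hfh α x hx1, mul_zero]
    have hsplit : (∑ α, fderiv ℝ u (φ x) (EuclideanSpace.single α 1) *
        (f x * lap (fun z => φ z α) x + ⟪gradient f x, gradient (fun z => φ z α) x⟫)) =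
        f x * (∑ α, fderiv ℝ u (φ x) (EuclideanSpace.single α 1) * lap (fun z => φ z α) x) +
        ∑ α, fderiv ℝ u (φ x) (EuclideanSpace.single α 1) *
          ⟪gradient f x, gradient (fun z => φ z α) x⟫ := by
      rw [Finset.mul_sum, ← Finset.sum_add_distrib]
      exact Finset.sum_congr rfl fun α _ => by ring
    rw [hsplit] at hzero
    linear_combination hzero
  refine ⟨main, ?_⟩
  intro V hV u hu hharm _ x hx
  rw [main V hV u hu x hx, hharm (φ x) hx.2, mul_zero]
end

section
/- Let m, n ≥ 1, let Ω ⊆ ℝ^m be open, and let f₁, f₂ : Ω → (0,∞) be smooth. If a C² map φ : Ω → ℝ^n is both an f₁-harmonic map and an f₂-harmonic map, then the gradient of f₁/f₂ lies in the kernel of the differential of φ: for every x ∈ Ω, Dφ_x( ∇(f₁/f₂)(x) ) = 0, where Dφ_x denotes the total (Fréchet) derivative of φ at x. -/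
open scoped RealInnerProductSpace

lemma inner_grad {m : ℕ} (u : EuclideanSpace ℝ (Fin m) → ℝ)
    (x w : EuclideanSpace ℝ (Fin m)) :
    ⟪gradient u x, w⟫ = fderiv ℝ u x w := by
  rw [gradient]
  exact InnerProductSpace.toDual_symm_apply

theorem stmt4 {m n : ℕ} (hm : 1 ≤ m) (hn : 1 ≤ n)
    (Ω : Set (EuclideanSpace ℝ (Fin m))) (hΩ : IsOpen Ω)
    (f₁ f₂ : EuclideanSpace ℝ (Fin m) → ℝ)
    (hf₁ : ContDiffOn ℝ (⊤ : ℕ∞) f₁ Ω) (hf₂ : ContDiffOn ℝ (⊤ : ℕ∞) f₂ Ω)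
    (hf₁pos : ∀ x ∈ Ω, 0 < f₁ x) (hf₂pos : ∀ x ∈ Ω, 0 < f₂ x)
    (φ : EuclideanSpace ℝ (Fin m) → EuclideanSpace ℝ (Fin n))
    (hφ : ContDiffOn ℝ 2 φ Ω)
    -- `φ` is an `f₁`-harmonic map
    (h1 : ∀ α : Fin n, ∀ x ∈ Ω,
      f₁ x * lap (fun y => φ y α) x +
        ⟪gradient f₁ x, gradient (fun y => φ y α) x⟫ = 0)
    -- `φ` is an `f₂`-harmonic map
    (h2 : ∀ α : Fin n, ∀ x ∈ Ω,
      f₂ x * lap (fun y => φ y α) x +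
        ⟪gradient f₂ x, gradient (fun y => φ y α) x⟫ = 0) :
    -- the gradient of `f₁ / f₂` lies in the kernel of the differential of `φ`
    ∀ x ∈ Ω, fderiv ℝ φ x (gradient (fun y => f₁ y / f₂ y) x) = 0 := by
  intro x hx
  have hxn : Ω ∈ nhds x := hΩ.mem_nhds hx
  have hd₁ : DifferentiableAt ℝ f₁ x :=
    (hf₁.contDiffAt hxn).differentiableAt (by simp)
  have hd₂ : DifferentiableAt ℝ f₂ x :=
    (hf₂.contDiffAt hxn).differentiableAt (by simp)
  have hdφ : DifferentiableAt ℝ φ x :=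
    (hφ.contDiffAt hxn).differentiableAt (by norm_num)
  have hne : f₂ x ≠ 0 := (hf₂pos x hx).ne'
  set F₁ := fderiv ℝ f₁ x
  set F₂ := fderiv ℝ f₂ x
  -- derivative of the quotient
  have hinv : HasFDerivAt (fun y => (f₂ y)⁻¹) ((-(f₂ x ^ 2)⁻¹) • F₂) x := by
    have := (hasDerivAt_inv hne).comp_hasFDerivAt x hd₂.hasFDerivAt
    simpa [Function.comp_def] using this
  have hq : HasFDerivAt (fun y => f₁ y / f₂ y)
      (f₁ x • ((-(f₂ x ^ 2)⁻¹) • F₂) + (f₂ x)⁻¹ • F₁) x := by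
    have := hd₁.hasFDerivAt.mul hinv
    simpa [div_eq_mul_inv, Pi.mul_def] using this
  set g := gradient (fun y => f₁ y / f₂ y) x with hg
  -- componentwise
  apply PiLp.ext
  intro α
  have hdα : DifferentiableAt ℝ (fun y => φ y α) x := by
    exact (EuclideanSpace.proj α).differentiableAt.comp x hdφ
  have hcomp : fderiv ℝ (fun y => φ y α) x =
      (EuclideanSpace.proj α (𝕜 := ℝ)).comp (fderiv ℝ φ x) := by
    have := fderiv_comp x (EuclideanSpace.proj α (𝕜 := ℝ)).differentiableAt hdφ
    rw [ContinuousLinearMap.fderiv] at this; exact this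
  have key : fderiv ℝ (fun y => φ y α) x g = 0 := by
    set v := gradient (fun y => φ y α) x with hv
    have e1 : fderiv ℝ (fun y => φ y α) x g = ⟪g, v⟫ := by
      rw [← inner_grad (fun y => φ y α) x g, real_inner_comm]
    have e2 : ⟪g, v⟫ = fderiv ℝ (fun y => f₁ y / f₂ y) x v := inner_grad _ x v
    rw [e1, e2, hq.fderiv]
    have hF₁ : F₁ v = - (f₁ x * lap (fun y => φ y α) x) := by
      have := h1 α x hx
      rw [inner_grad f₁ x v] at this
      linarith
    have hF₂ : F₂ v = - (f₂ x * lap (fun y => φ y α) x) := by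
      have := h2 α x hx
      rw [inner_grad f₂ x v] at this
      linarith
    simp only [ContinuousLinearMap.add_apply, ContinuousLinearMap.smul_apply, hF₁, hF₂,
      smul_eq_mul]
    field_simp
    ring
  have : (fderiv ℝ φ x g) α = fderiv ℝ (fun y => φ y α) x g := by
    rw [hcomp]; rfl
  rw [← this] at key
  simpa using key
end

section
/- Let m ≥ 2, n ≥ m, let Ω ⊆ ℝ^m be open and connected, let f : Ω → (0,∞) be smooth, and let φ : Ω → ℝ^n be a smooth isometric immersion: ⟨∂φ/∂x^i (x), ∂φ/∂x^j (x)⟩ = δ_{ij} for all x ∈ Ω and 1 ≤ i, j ≤ m. Then φ is an f-harmonic map (i.e., f(x)·Δφ(x) + Dφ_x(∇f(x)) = 0 for all x) if and only if f is constant on Ω and φ is harmonic, i.e., Δφ = 0 on Ω. -/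
open scoped RealInnerProductSpace

/-- The componentwise Euclidean Laplacian of a map `ℝ^m → ℝ^n`. -/
noncomputable def lapV {m n : ℕ}
    (φ : EuclideanSpace ℝ (Fin m) → EuclideanSpace ℝ (Fin n))
    (x : EuclideanSpace ℝ (Fin m)) : EuclideanSpace ℝ (Fin n) :=
  ∑ i : Fin m, fderiv ℝ (fun y => fderiv ℝ φ y (EuclideanSpace.single i 1)) x
    (EuclideanSpace.single i 1)

private theorem decompE {m : ℕ} (v : EuclideanSpace ℝ (Fin m)) :
    v = ∑ i, v i • EuclideanSpace.single i (1:ℝ) := by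
  ext j
  rw [show (∑ i, v i • EuclideanSpace.single i (1:ℝ)) j
      = ∑ i, (v i • EuclideanSpace.single i (1:ℝ)) j from by rw [WithLp.ofLp_sum, Finset.sum_apply]]
  simp [EuclideanSpace.single_apply]

private theorem hderA {m n : ℕ} (φ : EuclideanSpace ℝ (Fin m) → EuclideanSpace ℝ (Fin n))
    (x : EuclideanSpace ℝ (Fin m))
    (h : DifferentiableAt ℝ (fderiv ℝ φ) x) (i : Fin m) :
    HasFDerivAt (fun y => fderiv ℝ φ y (EuclideanSpace.single i 1))
      ((ContinuousLinearMap.apply ℝ (EuclideanSpace ℝ (Fin n))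
        (EuclideanSpace.single i 1)).comp (fderiv ℝ (fderiv ℝ φ) x)) x :=
  ((ContinuousLinearMap.apply ℝ _ _).hasFDerivAt.comp x h.hasFDerivAt : )

/-- Orthogonality of the Laplacian to the image of the differential,
for an isometric immersion. -/
private theorem lapV_orth {m n : ℕ} {Ω : Set (EuclideanSpace ℝ (Fin m))} (hΩ : IsOpen Ω)
    {φ : EuclideanSpace ℝ (Fin m) → EuclideanSpace ℝ (Fin n)}
    (hφ : ContDiffOn ℝ (⊤ : ℕ∞) φ Ω)
    (hiso : ∀ x ∈ Ω, ∀ i j : Fin m,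
      ⟪fderiv ℝ φ x (EuclideanSpace.single i 1),
        fderiv ℝ φ x (EuclideanSpace.single j 1)⟫ =
        (if i = j then 1 else 0))
    {x : EuclideanSpace ℝ (Fin m)} (hx : x ∈ Ω) (j : Fin m) :
    ⟪lapV φ x, fderiv ℝ φ x (EuclideanSpace.single j 1)⟫ = 0 := by
  have hφx : ContDiffAt ℝ (⊤ : ℕ∞) φ x := (hφ x hx).contDiffAt (hΩ.mem_nhds hx)
  have hDx : ContDiffAt ℝ (⊤ : ℕ∞) (fderiv ℝ φ) x := hφx.fderiv_right (by simp)
  have hDdiff : DifferentiableAt ℝ (fderiv ℝ φ) x := hDx.differentiableAt (by simp)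
  set D' := fderiv ℝ (fderiv ℝ φ) x with hD'def
  have hsym : ∀ v w, D' v w = D' w v := hφx.isSymmSndFDerivAt (by rw [minSmoothness_of_isRCLikeNormedField]; exact WithTop.coe_le_coe.mpr (le_top : (2 : ℕ∞) ≤ ⊤))
  -- antisymmetry relation from differentiating the isometry condition
  have hQ : ∀ a b c : Fin m,
      ⟪fderiv ℝ φ x (EuclideanSpace.single a 1),
        D' (EuclideanSpace.single c 1) (EuclideanSpace.single b 1)⟫
      + ⟪D' (EuclideanSpace.single c 1) (EuclideanSpace.single a 1),
          fderiv ℝ φ x (EuclideanSpace.single b 1)⟫ = 0 := by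
    intro a b c
    have hin : HasFDerivAt
        (fun y => ⟪fderiv ℝ φ y (EuclideanSpace.single a 1),
          fderiv ℝ φ y (EuclideanSpace.single b 1)⟫)
        ((fderivInnerCLM ℝ (fderiv ℝ φ x (EuclideanSpace.single a 1),
            fderiv ℝ φ x (EuclideanSpace.single b 1))).comp
          (((ContinuousLinearMap.apply ℝ _ (EuclideanSpace.single a 1)).comp D').prod
           ((ContinuousLinearMap.apply ℝ _ (EuclideanSpace.single b 1)).comp D'))) x :=
      (hderA φ x hDdiff a).inner ℝ (hderA φ x hDdiff b)
    have hconst : HasFDerivAt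
        (fun y => ⟪fderiv ℝ φ y (EuclideanSpace.single a 1),
          fderiv ℝ φ y (EuclideanSpace.single b 1)⟫)
        (0 : EuclideanSpace ℝ (Fin m) →L[ℝ] ℝ) x := by
      have hev : (fun y => ⟪fderiv ℝ φ y (EuclideanSpace.single a 1),
          fderiv ℝ φ y (EuclideanSpace.single b 1)⟫)
          =ᶠ[nhds x] (fun _ => if a = b then (1:ℝ) else 0) := by
        filter_upwards [hΩ.mem_nhds hx] with y hy using hiso y hy a b
      exact (hasFDerivAt_const _ _).congr_of_eventuallyEq hev
    have h0 := hin.unique hconst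
    have h1 := congrArg (fun (L : EuclideanSpace ℝ (Fin m) →L[ℝ] ℝ) =>
      L (EuclideanSpace.single c 1)) h0
    simpa using h1
  have hzero : ∀ i : Fin m,
      ⟪D' (EuclideanSpace.single i 1) (EuclideanSpace.single i 1),
        fderiv ℝ φ x (EuclideanSpace.single j 1)⟫ = 0 := by
    intro i
    have h1 := hQ i i j
    have h2 := hQ i j i
    rw [real_inner_comm] at h1
    -- h1 : Q j i i + Q j i i = 0  where Q c a b = ⟪D' e_c e_a, ∂_b⟫ ... need care
    have h1' : ⟪D' (EuclideanSpace.single j 1) (EuclideanSpace.single i 1),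
        fderiv ℝ φ x (EuclideanSpace.single i 1)⟫ = 0 := by linarith
    rw [real_inner_comm] at h2
    rw [hsym (EuclideanSpace.single i 1) (EuclideanSpace.single j 1)] at h2
    -- h2 : ⟪D' e_i e_i, ∂_j⟫ + ⟪D' e_j e_i, ∂_i⟫ = 0
    linarith
  have hlap : lapV φ x = ∑ i, D' (EuclideanSpace.single i 1) (EuclideanSpace.single i 1) := by
    unfold lapV
    refine Finset.sum_congr rfl fun i _ => ?_
    rw [(hderA φ x hDdiff i).fderiv]
    rfl
  rw [hlap, sum_inner]
  exact Finset.sum_eq_zero fun i _ => hzero i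

theorem stmt6 {m n : ℕ} (hm : 2 ≤ m) (hn : m ≤ n)
    (Ω : Set (EuclideanSpace ℝ (Fin m))) (hΩ : IsOpen Ω) (hΩc : IsConnected Ω)
    (f : EuclideanSpace ℝ (Fin m) → ℝ) (hf : ContDiffOn ℝ (⊤ : ℕ∞) f Ω)
    (hfpos : ∀ x ∈ Ω, 0 < f x)
    (φ : EuclideanSpace ℝ (Fin m) → EuclideanSpace ℝ (Fin n))
    (hφ : ContDiffOn ℝ (⊤ : ℕ∞) φ Ω)
    -- `φ` is an isometric immersion
    (hiso : ∀ x ∈ Ω, ∀ i j : Fin m,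
      ⟪fderiv ℝ φ x (EuclideanSpace.single i 1),
        fderiv ℝ φ x (EuclideanSpace.single j 1)⟫ =
        (if i = j then 1 else 0)) :
    -- `φ` is `f`-harmonic iff `f` is constant and `φ` is harmonic
    (∀ x ∈ Ω, f x • lapV φ x + fderiv ℝ φ x (gradient f x) = 0) ↔
      ((∃ c : ℝ, ∀ x ∈ Ω, f x = c) ∧ ∀ x ∈ Ω, lapV φ x = 0) := by
  constructor
  · intro H
    have hgrad0 : ∀ x ∈ Ω, gradient f x = 0 := by
      intro x hx
      have hval : ∀ (v : EuclideanSpace ℝ (Fin m)) (j : Fin m),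
          ⟪fderiv ℝ φ x v, fderiv ℝ φ x (EuclideanSpace.single j 1)⟫ = v j := by
        intro v j
        conv_lhs => rw [decompE v]
        rw [map_sum, sum_inner]
        rw [Finset.sum_eq_single j]
        · rw [map_smul, real_inner_smul_left, hiso x hx j j]
          simp
        · intro i _ hij
          rw [map_smul, real_inner_smul_left, hiso x hx i j]
          simp [hij]
        · simp
      have hj : ∀ j, gradient f x j = 0 := by
        intro j
        have h1 := congrArg
          (fun w => ⟪w, fderiv ℝ φ x (EuclideanSpace.single j 1)⟫) (H x hx)
        simp only [inner_add_left, inner_smul_left, inner_zero_left] at h1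
        rw [lapV_orth hΩ hφ hiso hx j, hval] at h1
        simpa using h1
      ext j
      exact hj j
    have hfd : ∀ x ∈ Ω, fderiv ℝ f x = 0 := by
      intro x hx
      have h2 : (InnerProductSpace.toDual ℝ (EuclideanSpace ℝ (Fin m))).symm
          (fderiv ℝ f x) = 0 := hgrad0 x hx
      have := congrArg (InnerProductSpace.toDual ℝ (EuclideanSpace ℝ (Fin m))) h2
      simpa using this
    have hlap0 : ∀ x ∈ Ω, lapV φ x = 0 := by
      intro x hx
      have h := H x hx
      rw [hgrad0 x hx, map_zero, add_zero] at h
      exact (smul_eq_zero.mp h).resolve_left (hfpos x hx).ne'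
    refine ⟨?_, hlap0⟩
    obtain ⟨x₀, hx₀⟩ := hΩc.nonempty
    refine ⟨f x₀, fun x hx => ?_⟩
    by_contra hne
    set u : Set (EuclideanSpace ℝ (Fin m)) := {y | y ∈ Ω ∧ f y = f x₀} with hu_def
    have hu : IsOpen u := by
      rw [Metric.isOpen_iff]
      rintro y ⟨hyΩ, hyf⟩
      obtain ⟨ε, hε, hball⟩ := Metric.isOpen_iff.mp hΩ y hyΩ
      refine ⟨ε, hε, fun z hz => ⟨hball hz, ?_⟩⟩
      have hconst := (convex_ball y ε).is_const_of_fderivWithin_eq_zero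
        ((hf.mono hball).differentiableOn (by simp))
        (fun w hw => by
          rw [fderivWithin_of_isOpen Metric.isOpen_ball hw]
          exact hfd w (hball hw))
        hz (Metric.mem_ball_self hε)
      rw [hconst, hyf]
    set v : Set (EuclideanSpace ℝ (Fin m)) := Ω ∩ f ⁻¹' {f x₀}ᶜ with hv_def
    have hv : IsOpen v :=
      (hf.continuousOn).isOpen_inter_preimage hΩ isOpen_compl_singleton
    have hsub : Ω ⊆ u ∪ v := by
      intro y hy
      by_cases h : f y = f x₀
      · exact Or.inl ⟨hy, h⟩
      · exact Or.inr ⟨hy, h⟩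
    have hne1 : (Ω ∩ u).Nonempty := ⟨x₀, hx₀, hx₀, rfl⟩
    have hne2 : (Ω ∩ v).Nonempty := ⟨x, hx, hx, hne⟩
    obtain ⟨z, _, hzu, hzv⟩ := hΩc.isPreconnected u v hu hv hsub hne1 hne2
    exact hzv.2 hzu.2
  · rintro ⟨⟨c, hc⟩, hlap⟩ x hx
    have hfd : fderiv ℝ f x = 0 := by
      have hev : f =ᶠ[nhds x] fun _ => c := by
        filter_upwards [hΩ.mem_nhds hx] with y hy using hc y hy
      rw [hev.fderiv_eq]
      exact fderiv_const_apply c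
    have hgrad : gradient f x = 0 := by
      unfold gradient
      rw [hfd, map_zero]
    rw [hlap x hx, hgrad, map_zero, smul_zero, add_zero]
end

section
/- Let m ≥ 2, let Ω ⊆ ℝ^m be open and connected, let f : Ω → (0,∞) be smooth, and let φ : Ω → ℝ^m be a smooth conformal map of equal-dimensional spaces: there is a smooth λ : Ω → (0,∞) with ⟨Dφ_x(u), Dφ_x(v)⟩ = λ(x)²·⟨u, v⟩ for all x ∈ Ω and all u, v ∈ ℝ^m. Then φ is an f-harmonic map (f·Δφ^α + ⟨∇f, ∇φ^α⟩ = 0 for each component α) if and only if there exists a constant C > 0 such that f = C·λ^{m−2} on Ω. -/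
open scoped RealInnerProductSpace

section aux
variable {m : ℕ}

local notation "E" => EuclideanSpace ℝ (Fin m)

private noncomputable def ee (i : Fin m) : EuclideanSpace ℝ (Fin m) :=
  EuclideanSpace.single i 1

private lemma inner_ee (i j : Fin m) : ⟪(ee i : E), ee j⟫ = if i = j then (1:ℝ) else 0 := by
  simp [ee, EuclideanSpace.inner_single_left, EuclideanSpace.single_apply]

private lemma sum_apply' (g : Fin m → E) (k : Fin m) : (∑ j, g j) k = ∑ j, g j k := by
  induction (Finset.univ : Finset (Fin m)) using Finset.induction with
  | empty => simp
  | insert _ _ h ih => simp [Finset.sum_insert h, ih]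

private lemma decomp (v : E) : ∑ j : Fin m, v j • (ee j : E) = v := by
  ext k
  rw [sum_apply']
  simp [ee, PiLp.smul_apply, EuclideanSpace.single_apply]

private lemma clm_zero_of_basis (L : E →L[ℝ] ℝ) (h : ∀ j, L (ee j) = 0) : L = 0 := by
  ext v
  rw [← decomp v]
  simp [map_sum, h]

private lemma grad_inner (g : E → ℝ) (x v : E) : ⟪gradient g x, v⟫ = fderiv ℝ g x v :=
  InnerProductSpace.toDual_symm_apply

end aux

set_option maxHeartbeats 2000000 in
theorem stmt7 {m : ℕ} (hm : 2 ≤ m)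
    (Ω : Set (EuclideanSpace ℝ (Fin m))) (hΩ : IsOpen Ω) (hΩc : IsConnected Ω)
    (f : EuclideanSpace ℝ (Fin m) → ℝ) (hf : ContDiffOn ℝ (⊤ : ℕ∞) f Ω)
    (hfpos : ∀ x ∈ Ω, 0 < f x)
    (φ : EuclideanSpace ℝ (Fin m) → EuclideanSpace ℝ (Fin m))
    (hφ : ContDiffOn ℝ (⊤ : ℕ∞) φ Ω)
    (lam : EuclideanSpace ℝ (Fin m) → ℝ) (hlam : ContDiffOn ℝ (⊤ : ℕ∞) lam Ω)
    (hlampos : ∀ x ∈ Ω, 0 < lam x)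
    -- `φ` is a conformal map between equal-dimensional spaces
    (hconf : ∀ x ∈ Ω, ∀ u v : EuclideanSpace ℝ (Fin m),
      ⟪fderiv ℝ φ x u, fderiv ℝ φ x v⟫ = lam x ^ 2 * ⟪u, v⟫) :
    -- `φ` is an `f`-harmonic map iff `f = C * lam ^ (m - 2)`
    (∀ α : Fin m, ∀ x ∈ Ω,
      f x * lap (fun y => φ y α) x +
        ⟪gradient f x, gradient (fun y => φ y α) x⟫ = 0) ↔
      ∃ C : ℝ, 0 < C ∧ ∀ x ∈ Ω, f x = C * lam x ^ (m - 2) := by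
  classical

  -- differentiability data at points of Ω
  have hfd : ∀ x ∈ Ω, HasFDerivAt f (fderiv ℝ f x) x := fun x hx =>
    ((hf.contDiffAt (hΩ.mem_nhds hx)).differentiableAt (by simp)).hasFDerivAt
  have hlamd : ∀ x ∈ Ω, HasFDerivAt lam (fderiv ℝ lam x) x := fun x hx =>
    ((hlam.contDiffAt (hΩ.mem_nhds hx)).differentiableAt (by simp)).hasFDerivAt
  have hφd : ∀ x ∈ Ω, DifferentiableAt ℝ φ x := fun x hx =>
    (hφ.contDiffAt (hΩ.mem_nhds hx)).differentiableAt (by simp)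
  -- the key pointwise reduction
  have hmain : ∀ x ∈ Ω,
      ((∀ α : Fin m, f x * lap (fun y => φ y α) x +
          ⟪gradient f x, gradient (fun y => φ y α) x⟫ = 0) ↔
        (∀ k : Fin m, lam x * fderiv ℝ f x (ee k) =
          ((m:ℝ) - 2) * f x * fderiv ℝ lam x (ee k))) := by
    intro x hx
    have hmem : Ω ∈ nhds x := hΩ.mem_nhds hx
    have hφx : ContDiffAt ℝ (⊤ : ℕ∞) φ x := hφ.contDiffAt hmem
    obtain ⟨Dx, hDx⟩ : ∃ L : EuclideanSpace ℝ (Fin m) →L[ℝ] EuclideanSpace ℝ (Fin m),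
        fderiv ℝ φ x = L := ⟨_, rfl⟩
    obtain ⟨D2, hD2def⟩ : ∃ L : EuclideanSpace ℝ (Fin m) →L[ℝ]
        (EuclideanSpace ℝ (Fin m) →L[ℝ] EuclideanSpace ℝ (Fin m)),
        fderiv ℝ (fderiv ℝ φ) x = L := ⟨_, rfl⟩
    obtain ⟨Lx, hLx⟩ : ∃ L : EuclideanSpace ℝ (Fin m) →L[ℝ] ℝ, fderiv ℝ lam x = L := ⟨_, rfl⟩
    obtain ⟨Fx, hFx⟩ : ∃ L : EuclideanSpace ℝ (Fin m) →L[ℝ] ℝ, fderiv ℝ f x = L := ⟨_, rfl⟩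
    have hD2 : HasFDerivAt (fderiv ℝ φ) D2 x := by
      rw [← hD2def]
      exact (((hφx.fderiv_right (m := 1) ((by exact WithTop.coe_le_coe.mpr le_top))).differentiableAt (by simp))).hasFDerivAt
    -- derivative of y ↦ fderiv φ y u
    have hDu : ∀ u : EuclideanSpace ℝ (Fin m), HasFDerivAt (fun y => fderiv ℝ φ y u)
        ((ContinuousLinearMap.apply ℝ (EuclideanSpace ℝ (Fin m)) u).comp D2) x := fun u =>
      ((ContinuousLinearMap.apply ℝ (EuclideanSpace ℝ (Fin m)) u).hasFDerivAt.comp x hD2)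
    have hsym : ∀ u v : EuclideanSpace ℝ (Fin m), D2 u v = D2 v u := by
      intro u v
      rw [← hD2def]
      exact (hφx.isSymmSndFDerivAt (by rw [minSmoothness_of_isRCLikeNormedField]; exact (WithTop.coe_le_coe.mpr le_top : ((2:ℕ∞) : WithTop ℕ∞) ≤ ((⊤:ℕ∞) : WithTop ℕ∞)))).eq u v
    have hconfx : ∀ i j : Fin m, ⟪Dx (ee i), Dx (ee j)⟫
        = lam x ^ 2 * (if i = j then (1:ℝ) else 0) := by
      intro i j
      have h3 := hconf x hx (ee i) (ee j)
      rw [inner_ee] at h3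
      rw [← hDx]
      exact h3
    set a : Fin m → Fin m → Fin m → ℝ :=
      fun i j k => ⟪D2 (ee i) (ee j), Dx (ee k)⟫ with ha
    have hconf2 : ∀ i j k : Fin m,
        a k i j + a k j i = 2 * lam x * Lx (ee k) * (if i = j then (1:ℝ) else 0) := by
      intro i j k
      have hL : HasFDerivAt (fun y => ⟪fderiv ℝ φ y (ee i), fderiv ℝ φ y (ee j)⟫)
          ((fderivInnerCLM ℝ (Dx (ee i), Dx (ee j))).comp
            (((ContinuousLinearMap.apply ℝ (EuclideanSpace ℝ (Fin m)) (ee i)).comp D2).prod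
             ((ContinuousLinearMap.apply ℝ (EuclideanSpace ℝ (Fin m)) (ee j)).comp D2))) x := by
        have := HasFDerivAt.inner ℝ (hDu (ee i)) (hDu (ee j))
        rw [hDx] at this
        exact this
      have hR : HasFDerivAt
          (fun y => lam y ^ 2 * ⟪(ee i : EuclideanSpace ℝ (Fin m)), ee j⟫)
          ((⟪(ee i : EuclideanSpace ℝ (Fin m)), ee j⟫) • ((((2:ℕ):ℝ) * lam x ^ (2-1)) • Lx)) x := by
        rw [← hLx]
        exact ((hasDerivAt_pow 2 (lam x)).comp_hasFDerivAt x (hlamd x hx)).mul_const _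
      have heq : (fun y => ⟪fderiv ℝ φ y (ee i), fderiv ℝ φ y (ee j)⟫)
          =ᶠ[nhds x] (fun y => lam y ^ 2 * ⟪(ee i : EuclideanSpace ℝ (Fin m)), ee j⟫) :=
        Filter.eventually_of_mem hmem (fun y hy => hconf y hy _ _)
      have hfde := Filter.EventuallyEq.fderiv_eq (𝕜 := ℝ) heq
      rw [hL.fderiv, hR.fderiv] at hfde
      have h2 := congrArg (fun (L : EuclideanSpace ℝ (Fin m) →L[ℝ] ℝ) => L (ee k)) hfde
      simp only [ContinuousLinearMap.comp_apply, ContinuousLinearMap.prod_apply,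
        fderivInnerCLM_apply, ContinuousLinearMap.smul_apply,
        ContinuousLinearMap.apply_apply, smul_eq_mul] at h2
      rw [inner_ee] at h2
      have e1 : ⟪Dx (ee i), D2 (ee k) (ee j)⟫ = a k j i := by
        rw [ha]; exact real_inner_comm _ _
      have e2 : ⟪D2 (ee k) (ee i), Dx (ee j)⟫ = a k i j := rfl
      rw [e1, e2] at h2
      push_cast at h2 ⊢
      linarith [h2]
    have hsym' : ∀ i j k : Fin m, a i j k = a j i k := by
      intro i j k; rw [ha]; simp only; rw [hsym (ee i) (ee j)]
    have keyA : ∀ i j k : Fin m, a i j k =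
        lam x * Lx (ee i) * (if j = k then (1:ℝ) else 0)
        + lam x * Lx (ee j) * (if i = k then (1:ℝ) else 0)
        - lam x * Lx (ee k) * (if i = j then (1:ℝ) else 0) := by
      intro i j k
      have h1 := hconf2 j k i
      have h2 := hconf2 i k j
      have h3 := hconf2 i j k
      have s1 := hsym' i k j
      have s2 := hsym' j k i
      have s3 := hsym' i j k
      have s4 := hsym' j i k
      linarith
    -- sum over the diagonal
    have sumA : ∀ k : Fin m, (∑ i, a i i k) = (2 - (m:ℝ)) * lam x * Lx (ee k) := by
      intro k
      have hterm : ∀ i : Fin m, a i i k =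
          2 * (lam x * Lx (ee i) * (if i = k then (1:ℝ) else 0)) - lam x * Lx (ee k) := by
        intro i
        rw [keyA i i k]
        by_cases h : i = k <;> simp [h] <;> ring
      rw [Finset.sum_congr rfl (fun i _ => hterm i)]
      rw [Finset.sum_sub_distrib, Finset.sum_const, ← Finset.mul_sum]
      have : (∑ i, lam x * Lx (ee i) * (if i = k then (1:ℝ) else 0)) = lam x * Lx (ee k) := by
        simp [mul_ite, Finset.sum_ite_eq']
      rw [this]
      simp
      ring
    -- component functions and lap
    have hproj : ∀ α : Fin m, ∀ y ∈ Ω,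
        fderiv ℝ (fun z => φ z α) y = (EuclideanSpace.proj α).comp (fderiv ℝ φ y) := by
      intro α y hy
      have : (fun z => φ z α) = (EuclideanSpace.proj α (𝕜 := ℝ)) ∘ φ := rfl
      rw [this, fderiv_comp y (EuclideanSpace.proj α).differentiableAt (hφd y hy),
        ContinuousLinearMap.fderiv]
    have hlap : ∀ α : Fin m, lap (fun y => φ y α) x = ∑ i, (D2 (ee i) (ee i)) α := by
      intro α
      unfold lap
      refine Finset.sum_congr rfl (fun i _ => ?_)
      have heq : (fun y => fderiv ℝ (fun z => φ z α) y (EuclideanSpace.single i 1))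
          =ᶠ[nhds x] (fun y => ((EuclideanSpace.proj α).comp
            ((ContinuousLinearMap.apply ℝ (EuclideanSpace ℝ (Fin m)) (ee i)))) (fderiv ℝ φ y)) := by
        refine Filter.eventually_of_mem hmem (fun y hy => ?_)
        show fderiv ℝ (fun z => φ z α) y (EuclideanSpace.single i 1) = _
        rw [hproj α y hy]
        rfl
      rw [Filter.EventuallyEq.fderiv_eq (𝕜 := ℝ) heq]
      have hcd : HasFDerivAt (fun y => ((EuclideanSpace.proj α).comp
            ((ContinuousLinearMap.apply ℝ (EuclideanSpace ℝ (Fin m)) (ee i)))) (fderiv ℝ φ y))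
          (((EuclideanSpace.proj α).comp
            ((ContinuousLinearMap.apply ℝ (EuclideanSpace ℝ (Fin m)) (ee i)))).comp D2) x :=
        ((EuclideanSpace.proj α).comp
            ((ContinuousLinearMap.apply ℝ (EuclideanSpace ℝ (Fin m)) (ee i)))).hasFDerivAt.comp x hD2
      rw [hcd.fderiv]
      rfl
    -- gradient term
    have hgradterm : ∀ α : Fin m,
        ⟪gradient f x, gradient (fun y => φ y α) x⟫
          = ∑ k, Fx (ee k) * (Dx (ee k)) α := by
      intro α
      rw [grad_inner]
      have hw : gradient (fun y => φ y α) x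
          = ∑ k, ((Dx (ee k)) α) • (ee k : EuclideanSpace ℝ (Fin m)) := by
        rw [← decomp (gradient (fun y => φ y α) x)]
        refine Finset.sum_congr rfl (fun k _ => ?_)
        congr 1
        have h4 : (gradient (fun y => φ y α) x) k
            = ⟪gradient (fun y => φ y α) x, ee k⟫ := by
          rw [ee, EuclideanSpace.inner_single_right]
          simp
        rw [h4, grad_inner, hproj α x hx, hDx]
        rfl
      rw [hw, map_sum]
      refine Finset.sum_congr rfl (fun k _ => ?_)
      rw [map_smul, smul_eq_mul, mul_comm]
      rw [hFx]
    -- the vector V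
    obtain ⟨V, hV⟩ : ∃ v : EuclideanSpace ℝ (Fin m),
        f x • (∑ i, D2 (ee i) (ee i)) + ∑ j, Fx (ee j) • Dx (ee j) = v := ⟨_, rfl⟩
    have hVα : ∀ α : Fin m, V α = f x * lap (fun y => φ y α) x +
        ⟪gradient f x, gradient (fun y => φ y α) x⟫ := by
      intro α
      rw [hlap, hgradterm, ← hV, PiLp.add_apply, PiLp.smul_apply, smul_eq_mul,
        sum_apply', sum_apply']
      congr 1
    have hVinner : ∀ k : Fin m, ⟪V, Dx (ee k)⟫ =
        f x * ((2 - (m:ℝ)) * lam x * Lx (ee k)) + lam x ^ 2 * Fx (ee k) := by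
      intro k
      rw [← hV, inner_add_left, real_inner_smul_left, sum_inner, sum_inner]
      have hterm : ∀ j : Fin m, ⟪Fx (ee j) • Dx (ee j), Dx (ee k)⟫
          = Fx (ee j) * (lam x ^ 2 * (if j = k then (1:ℝ) else 0)) := by
        intro j
        rw [real_inner_smul_left, hconfx j k]
      rw [Finset.sum_congr rfl (fun j _ => hterm j), sumA k]
      have h5 : (∑ j, Fx (ee j) * (lam x ^ 2 * (if j = k then (1:ℝ) else 0)))
          = lam x ^ 2 * Fx (ee k) := by
        simp [mul_ite, Finset.sum_ite_eq']
        ring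
      rw [h5]
    -- Dx is surjective
    have hsurj : Function.Surjective Dx := by
      have hinj : Function.Injective Dx := by
        intro u v huv
        have hz : Dx (u - v) = 0 := by rw [map_sub, huv, sub_self]
        have h0 : (0:ℝ) = lam x ^ 2 * ⟪u - v, u - v⟫ := by
          rw [← hconf x hx (u-v) (u-v), hDx, hz, inner_zero_left]
        have hne : lam x ^ 2 ≠ 0 := pow_ne_zero _ (hlampos x hx).ne'
        have h6 : ⟪u - v, u - v⟫ = (0:ℝ) := by
          rcases mul_eq_zero.mp h0.symm with h | h
          · exact absurd h hne
          · exact h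
        exact sub_eq_zero.mp (inner_self_eq_zero.mp h6)
      exact LinearMap.injective_iff_surjective.mp hinj
    constructor
    · intro hharm k
      have hV0 : V = 0 := by
        ext α
        rw [hVα α, hharm α]
        rfl
      have h7 := hVinner k
      rw [hV0, inner_zero_left] at h7
      have hlx : lam x ≠ 0 := (hlampos x hx).ne'
      have h8 : lam x * (lam x * Fx (ee k) - ((m:ℝ) - 2) * f x * Lx (ee k)) = 0 := by
        ring_nf
        ring_nf at h7
        linarith
      rcases mul_eq_zero.mp h8 with h | h
      · exact absurd h hlx
      · rw [hFx, hLx] at *; linarith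
    · intro hE α
      have hV0 : V = 0 := by
        have hio : ∀ k, ⟪V, Dx (ee k)⟫ = 0 := by
          intro k
          rw [hVinner k]
          have h9 := hE k
          rw [hFx, hLx] at h9
          linear_combination lam x * h9
        have hall : ∀ u : EuclideanSpace ℝ (Fin m), ⟪V, Dx u⟫ = 0 := by
          intro u
          rw [← decomp u, map_sum, inner_sum]
          refine Finset.sum_eq_zero (fun k _ => ?_)
          rw [map_smul, real_inner_smul_right, hio k, mul_zero]
        obtain ⟨u, hu⟩ := hsurj V
        have h10 := hall u
        rw [hu] at h10
        exact inner_self_eq_zero.mp h10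
      rw [← hVα α, hV0]
      rfl
  have hpcast : ((m - 2 : ℕ) : ℝ) = (m:ℝ) - 2 := by
    push_cast [Nat.cast_sub hm]
    ring
  constructor
  · intro hharm
    have hE : ∀ x ∈ Ω, ∀ k, lam x * fderiv ℝ f x (ee k)
        = ((m:ℝ) - 2) * f x * fderiv ℝ lam x (ee k) :=
      fun x hx => (hmain x hx).mp (fun α => hharm α x hx)
    obtain ⟨x₀, hx₀⟩ := hΩc.nonempty
    set q : EuclideanSpace ℝ (Fin m) → ℝ := fun y => f y * (lam y ^ (m - 2))⁻¹ with hq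
    have hq0 : ∀ x ∈ Ω, HasFDerivAt q (0 : EuclideanSpace ℝ (Fin m) →L[ℝ] ℝ) x := by
      intro x hx
      have hlx : lam x ≠ 0 := (hlampos x hx).ne'
      have hpow : HasFDerivAt (fun y => lam y ^ (m - 2))
          ((((m - 2 : ℕ) : ℝ) * lam x ^ (m - 2 - 1)) • fderiv ℝ lam x) x :=
        (hasDerivAt_pow (m - 2) (lam x)).comp_hasFDerivAt x (hlamd x hx)
      have hinv : HasFDerivAt (fun y => (lam y ^ (m - 2))⁻¹)
          ((-((lam x ^ (m - 2)) ^ 2)⁻¹) •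
            ((((m - 2 : ℕ) : ℝ) * lam x ^ (m - 2 - 1)) • fderiv ℝ lam x)) x :=
        (hasDerivAt_inv (pow_ne_zero _ hlx)).comp_hasFDerivAt x hpow
      have hmul := (hfd x hx).mul hinv
      have hz : (f x • ((-((lam x ^ (m - 2)) ^ 2)⁻¹) •
            ((((m - 2 : ℕ) : ℝ) * lam x ^ (m - 2 - 1)) • fderiv ℝ lam x))
          + (lam x ^ (m - 2))⁻¹ • fderiv ℝ f x) = 0 := by
        apply clm_zero_of_basis
        intro j
        simp only [ContinuousLinearMap.add_apply, ContinuousLinearMap.smul_apply,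
          smul_eq_mul, ContinuousLinearMap.zero_apply]
        have h9 := hE x hx j
        rcases Nat.eq_zero_or_pos (m - 2) with hp0 | hppos
        · have hm2 : (m:ℝ) - 2 = 0 := by
            rw [← hpcast, hp0]
            simp
          rw [hm2] at h9
          have hF : fderiv ℝ f x (ee j) = 0 := by
            rcases mul_eq_zero.mp (by linarith [h9] : lam x * fderiv ℝ f x (ee j) = 0) with h | h
            · exact absurd h hlx
            · exact h
          rw [hp0, hF]
          simp
        · have hps : lam x ^ (m - 2 - 1) * lam x = lam x ^ (m - 2) := by
            rw [← pow_succ, Nat.sub_add_cancel hppos]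
          have h9' : lam x * fderiv ℝ f x (ee j)
              = ((m - 2 : ℕ) : ℝ) * f x * fderiv ℝ lam x (ee j) := by
            rw [hpcast]; exact h9
          have hpne : lam x ^ (m - 2) ≠ 0 := pow_ne_zero _ hlx
          have key : lam x ^ (m - 2) * fderiv ℝ f x (ee j)
              = ((m - 2 : ℕ) : ℝ) * f x * lam x ^ (m - 2 - 1) * fderiv ℝ lam x (ee j) := by
            linear_combination lam x ^ (m - 2 - 1) * h9' - fderiv ℝ f x (ee j) * hps
          have expand : f x * (-((lam x ^ (m - 2)) ^ 2)⁻¹ *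
                (((m - 2 : ℕ) : ℝ) * lam x ^ (m - 2 - 1) * fderiv ℝ lam x (ee j)))
              + (lam x ^ (m - 2))⁻¹ * fderiv ℝ f x (ee j)
              = ((lam x ^ (m - 2)) ^ 2)⁻¹ * (lam x ^ (m - 2) * fderiv ℝ f x (ee j)
                - ((m - 2 : ℕ) : ℝ) * f x * lam x ^ (m - 2 - 1) * fderiv ℝ lam x (ee j)) := by
            field_simp
            ring
          rw [expand, key]
          simp
      rw [hz] at hmul
      exact hmul
    have hloc : ∀ z ∈ Ω, ∃ ε > 0, Metric.ball z ε ⊆ Ω ∧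
        ∀ w ∈ Metric.ball z ε, q w = q z := by
      intro z hz
      obtain ⟨ε, εpos, hball⟩ := Metric.isOpen_iff.mp hΩ z hz
      refine ⟨ε, εpos, hball, fun w hw => ?_⟩
      have hdiff : DifferentiableOn ℝ q (Metric.ball z ε) := fun w hw =>
        ((hq0 w (hball hw)).differentiableAt).differentiableWithinAt
      have hzero : ∀ w ∈ Metric.ball z ε, fderivWithin ℝ q (Metric.ball z ε) w = 0 := by
        intro w hw
        rw [fderivWithin_of_isOpen Metric.isOpen_ball hw]
        exact (hq0 w (hball hw)).fderiv
      exact (convex_ball z ε).is_const_of_fderivWithin_eq_zero hdiff hzero hw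
        (Metric.mem_ball_self εpos)
    have hsub : Ω ⊆ {y | y ∈ Ω ∧ q y = q x₀} := by
      have hSopen : IsOpen {y | y ∈ Ω ∧ q y = q x₀} := by
        rw [Metric.isOpen_iff]
        rintro z ⟨hz, hqz⟩
        obtain ⟨ε, εpos, hball, hcst⟩ := hloc z hz
        exact ⟨ε, εpos, fun w hw => ⟨hball hw, by rw [hcst w hw, hqz]⟩⟩
      refine hΩc.isPreconnected.subset_of_closure_inter_subset hSopen
        ⟨x₀, hx₀, hx₀, rfl⟩ ?_
      rintro y ⟨hyc, hyΩ⟩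
      obtain ⟨ε, εpos, hball, hcst⟩ := hloc y hyΩ
      obtain ⟨w, hwS, hwd⟩ := Metric.mem_closure_iff.mp hyc ε εpos
      refine ⟨hyΩ, ?_⟩
      have hqwy : q w = q y := hcst w (by
        rw [Metric.mem_ball, dist_comm]
        exact hwd)
      rw [← hqwy, hwS.2]
    refine ⟨q x₀, ?_, ?_⟩
    · have : 0 < lam x₀ ^ (m - 2) := pow_pos (hlampos x₀ hx₀) _
      exact mul_pos (hfpos x₀ hx₀) (inv_pos.mpr this)
    · intro x hx
      have hqx : q x = q x₀ := (hsub hx).2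
      have hpne : lam x ^ (m - 2) ≠ 0 := pow_ne_zero _ (hlampos x hx).ne'
      have hq₀ : q x₀ = f x₀ * (lam x₀ ^ (m - 2))⁻¹ := rfl
      have hqq : q x = f x * (lam x ^ (m - 2))⁻¹ := rfl
      rw [hqq, hq₀] at hqx
      have hpne0 : lam x₀ ^ (m - 2) ≠ 0 := pow_ne_zero _ (hlampos x₀ hx₀).ne'
      rw [hq₀]
      field_simp at hqx ⊢
      linear_combination hqx
  · rintro ⟨C, hC, hCf⟩ α x hx
    refine (hmain x hx).mpr ?_ α
    intro k
    have heq : f =ᶠ[nhds x] (fun y => C * lam y ^ (m - 2)) :=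
      Filter.eventually_of_mem (hΩ.mem_nhds hx) hCf
    have hd : HasFDerivAt (fun y => C * lam y ^ (m - 2))
        (C • ((((m - 2 : ℕ) : ℝ) * lam x ^ (m - 2 - 1)) • fderiv ℝ lam x)) x :=
      ((hasDerivAt_pow (m - 2) (lam x)).comp_hasFDerivAt x (hlamd x hx)).const_mul C
    have hfd' : fderiv ℝ f x = C • ((((m - 2 : ℕ) : ℝ) * lam x ^ (m - 2 - 1)) • fderiv ℝ lam x) := by
      rw [Filter.EventuallyEq.fderiv_eq (𝕜 := ℝ) heq]
      exact hd.fderiv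
    rw [hfd', hCf x hx]
    simp only [ContinuousLinearMap.smul_apply, smul_eq_mul]
    rcases Nat.eq_zero_or_pos (m - 2) with hp0 | hppos
    · have hm2 : (m:ℝ) - 2 = 0 := by
        rw [← hpcast, hp0]
        simp
      rw [hp0, hm2]
      simp
    · have hps : lam x * lam x ^ (m - 2 - 1) = lam x ^ (m - 2) := by
        rw [mul_comm, ← pow_succ, Nat.sub_add_cancel hppos]
      rw [hpcast]
      linear_combination (((m:ℝ) - 2) * C * fderiv ℝ lam x (ee k)) * hps
end

section
/- Let m ≥ 3, a ∈ ℝ^m, r > 0, and define the inversion φ : ℝ^m∖{a} → ℝ^m by φ(x) = a + (r²/|x−a|²)·(x−a), and f : ℝ^m∖{a} → (0,∞) by f(x) = (r/|x−a|)^{2(m−2)}. Then: (i) φ is conformal with dilation λ(x) = r²/|x−a|², i.e., ⟨Dφ_x(u), Dφ_x(v)⟩ = (r²/|x−a|²)²·⟨u, v⟩ for all x and all u, v ∈ ℝ^m; and (ii) φ is an f-harmonic map, i.e., f·Δφ^α + ⟨∇f, ∇φ^α⟩ = 0 on ℝ^m∖{a} for every component α. Consequently φ is an f-harmonic morphism.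 -/
open scoped RealInnerProductSpace

section Aux

variable {m : ℕ} (a : EuclideanSpace ℝ (Fin m))

local notation "E" => EuclideanSpace ℝ (Fin m)


noncomputable def NN (a : E) : E → ℝ := fun y => ⟪y - a, y - a⟫

lemma NN_eq (y : E) : NN a y = ‖y - a‖ ^ 2 := real_inner_self_eq_norm_sq _

lemma NN_ne {y : E} (hy : y ≠ a) : NN a y ≠ 0 := by
  rw [NN_eq]
  exact pow_ne_zero _ (norm_ne_zero_iff.mpr (sub_ne_zero.mpr hy))

lemma hasFDerivAt_NN (x : E) :
    HasFDerivAt (NN a) ((2 : ℝ) • (innerSL ℝ (x - a))) x := by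
  have h : HasFDerivAt (fun y : E => y - a) (ContinuousLinearMap.id ℝ E) x :=
    (hasFDerivAt_id x).sub_const a
  refine (h.inner ℝ h).congr_fderiv (Eq.symm ?_)
  ext v
  simp only [ContinuousLinearMap.smul_apply, ContinuousLinearMap.comp_apply,
    ContinuousLinearMap.prod_apply, fderivInnerCLM_apply, innerSL_apply_apply,
    ContinuousLinearMap.id_apply, smul_eq_mul]
  rw [real_inner_comm v]
  ring

noncomputable def NI (a : E) : E → ℝ := fun y => (NN a y)⁻¹

lemma hasFDerivAt_NI {x : E} (hx : x ≠ a) :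
    HasFDerivAt (NI a) ((-2 * (NI a x) ^ 2) • (innerSL ℝ (x - a))) x := by
  have h := (hasDerivAt_inv (NN_ne a hx)).comp_hasFDerivAt x (hasFDerivAt_NN a x)
  refine h.congr_fderiv (Eq.symm ?_)
  rw [smul_smul]
  congr 1
  simp [NI, inv_pow]
  ring

local notation "ee" i => EuclideanSpace.single i (1:ℝ)

lemma inner_ee_right (w : E) (i : Fin m) : ⟪w, ee i⟫ = w i := by
  simp [EuclideanSpace.inner_single_right]

lemma inner_ee_left (w : E) (i : Fin m) : ⟪(ee i : E), w⟫ = w i := by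
  simp [EuclideanSpace.inner_single_left]

lemma sum_coord_smul_single (v : E) : ∑ i : Fin m, v i • (ee i : E) = v := by
  ext j
  simp only [PiLp.smul_apply] at *
  rw [WithLp.ofLp_sum, Fintype.sum_apply]
  simp [EuclideanSpace.single_apply, smul_eq_mul]

/-- the explicit derivative of φ -/
noncomputable def Aφ (a : E) (r : ℝ) (y : E) : E →L[ℝ] E :=
  (r ^ 2 * NI a y) • ContinuousLinearMap.id ℝ E +
    ((-2 * r ^ 2 * (NI a y) ^ 2) • (innerSL ℝ (y - a))).smulRight (y - a)

lemma Aφ_apply (r : ℝ) (y v : E) :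
    Aφ a r y v = (r ^ 2 * NI a y) • v + (-2 * r ^ 2 * (NI a y) ^ 2 * ⟪y - a, v⟫) • (y - a) := by
  simp only [Aφ, ContinuousLinearMap.add_apply, ContinuousLinearMap.smul_apply,
    ContinuousLinearMap.smulRight_apply, ContinuousLinearMap.id_apply, innerSL_apply_apply,
    smul_eq_mul]

lemma phi_rw {r : ℝ} {φ : E → E} (hφdef : ∀ x, φ x = a + (r ^ 2 / ‖x - a‖ ^ 2) • (x - a)) :
    φ = fun y => a + (r ^ 2 * NI a y) • (y - a) := by
  funext y
  rw [hφdef y, div_eq_mul_inv, NI, NN_eq]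

lemma hasFDerivAt_phi {r : ℝ} {φ : E → E}
    (hφdef : ∀ x, φ x = a + (r ^ 2 / ‖x - a‖ ^ 2) • (x - a))
    {x : E} (hx : x ≠ a) : HasFDerivAt φ (Aφ a r x) x := by
  rw [phi_rw a hφdef]
  have h := (((hasFDerivAt_NI a hx).const_mul (r ^ 2)).smul
    ((hasFDerivAt_id x).sub_const a)).const_add a
  refine h.congr_fderiv (Eq.symm ?_)
  refine ContinuousLinearMap.ext fun v => ?_
  rw [Aφ_apply]
  simp only [ContinuousLinearMap.add_apply, ContinuousLinearMap.smul_apply,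
    ContinuousLinearMap.smulRight_apply, ContinuousLinearMap.id_apply, innerSL_apply_apply,
    smul_eq_mul, ContinuousLinearMap.coe_smul', Pi.smul_apply, id_eq]
  module

lemma Aφ_conformal {r : ℝ} {x : E} (hx : x ≠ a) (u v : E) :
    ⟪Aφ a r x u, Aφ a r x v⟫ = (r ^ 2 * NI a x) ^ 2 * ⟪u, v⟫ := by
  have hNN : ⟪x - a, x - a⟫ = NN a x := rfl
  have hNI : NI a x * NN a x = 1 := inv_mul_cancel₀ (NN_ne a hx)
  rw [Aφ_apply, Aφ_apply]
  simp only [inner_add_left, inner_add_right, real_inner_smul_left, real_inner_smul_right]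
  rw [hNN, real_inner_comm u (x - a)]
  linear_combination (4 * r ^ 4 * NI a x ^ 3 * (⟪u, x - a⟫ : ℝ) * (⟪x - a, v⟫ : ℝ)) * hNI

lemma Aφ_symm {r : ℝ} (x : E) (u v : E) :
    ⟪Aφ a r x u, v⟫ = ⟪u, Aφ a r x v⟫ := by
  rw [Aφ_apply, Aφ_apply]
  simp only [inner_add_left, inner_add_right, real_inner_smul_left, real_inner_smul_right]
  rw [real_inner_comm u (x - a)]
  ring

noncomputable def C (a : E) (j : Fin m) : E → ℝ := fun y => y j - a j

lemma proj_apply' (j : Fin m) (v : E) : (EuclideanSpace.proj j : E →L[ℝ] ℝ) v = v j := rfl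

lemma hasFDerivAt_C (j : Fin m) (x : E) :
    HasFDerivAt (𝕜 := ℝ) (C a j) (EuclideanSpace.proj j) x := by
  have h : HasFDerivAt (𝕜 := ℝ) (fun y : E => y j) (EuclideanSpace.proj j) x :=
    (EuclideanSpace.proj j : E →L[ℝ] ℝ).hasFDerivAt
  exact h.sub_const (a j)

lemma C_eq (j : Fin m) (y : E) : C a j y = (y - a) j := by
  simp [C]

lemma phi_coord {r : ℝ} {φ : E → E}
    (hφdef : ∀ x, φ x = a + (r ^ 2 / ‖x - a‖ ^ 2) • (x - a)) (α : Fin m) :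
    (fun y => φ y α) = fun y => a α + r ^ 2 * (NI a y * C a α y) := by
  rw [phi_rw a hφdef]
  funext y
  simp [C, mul_assoc]

lemma hasFDerivAt_phi_coord {r : ℝ} {φ : E → E}
    (hφdef : ∀ x, φ x = a + (r ^ 2 / ‖x - a‖ ^ 2) • (x - a)) (α : Fin m)
    {x : E} (hx : x ≠ a) :
    HasFDerivAt (fun y => φ y α)
      ((r ^ 2 * NI a x) • EuclideanSpace.proj α +
        (-2 * r ^ 2 * (NI a x) ^ 2 * C a α x) • innerSL ℝ (x - a)) x := by
  rw [phi_coord a hφdef α]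
  have h := (((hasFDerivAt_NI a hx).mul (hasFDerivAt_C a α x)).const_mul (r ^ 2)).const_add
    (a α)
  refine h.congr_fderiv (Eq.symm ?_)
  refine ContinuousLinearMap.ext fun v => ?_
  simp only [ContinuousLinearMap.add_apply, ContinuousLinearMap.smul_apply,
    ContinuousLinearMap.coe_smul', Pi.smul_apply, innerSL_apply_apply, smul_eq_mul,
    proj_apply']
  ring

noncomputable def g1 (a : E) (r : ℝ) (α i : Fin m) : E → ℝ :=
  fun y => (EuclideanSpace.single i (1:ℝ) : E) α * (r ^ 2 * NI a y) +
    (-2 * r ^ 2) * ((NI a y * NI a y) * (C a α y * C a i y))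

lemma fderiv_phi_coord_eq_g1 {r : ℝ} {φ : E → E}
    (hφdef : ∀ x, φ x = a + (r ^ 2 / ‖x - a‖ ^ 2) • (x - a)) (α i : Fin m)
    {y : E} (hy : y ≠ a) :
    fderiv ℝ (fun z => φ z α) y (EuclideanSpace.single i (1:ℝ)) = g1 a r α i y := by
  rw [(hasFDerivAt_phi_coord a hφdef α hy).fderiv]
  simp only [ContinuousLinearMap.add_apply, ContinuousLinearMap.smul_apply,
    ContinuousLinearMap.coe_smul', Pi.smul_apply, innerSL_apply_apply, smul_eq_mul,
    proj_apply', g1]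
  rw [inner_ee_right, ← C_eq]
  ring

lemma fderiv_g1_ee {r : ℝ} (α i : Fin m) {x : E} (hx : x ≠ a) :
    fderiv ℝ (g1 a r α i) x (EuclideanSpace.single i (1:ℝ)) =
      -4 * r ^ 2 * (NI a x) ^ 2 * ((EuclideanSpace.single i (1:ℝ) : E) α) * C a i x
      + 8 * r ^ 2 * (NI a x) ^ 3 * (C a i x) ^ 2 * C a α x
      - 2 * r ^ 2 * (NI a x) ^ 2 * C a α x := by
  have hNI := hasFDerivAt_NI a hx
  have hCa := hasFDerivAt_C a α x
  have hCi := hasFDerivAt_C a i x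
  have hG : HasFDerivAt (g1 a r α i) _ x :=
    (((hNI.const_mul (r ^ 2)).const_mul ((EuclideanSpace.single i (1:ℝ) : E) α)).add
      (((hNI.mul hNI).mul (hCa.mul hCi)).const_mul (-2 * r ^ 2)))
  rw [hG.fderiv]
  simp only [ContinuousLinearMap.add_apply, ContinuousLinearMap.smul_apply,
    ContinuousLinearMap.coe_smul', Pi.smul_apply, innerSL_apply_apply, smul_eq_mul, proj_apply',
    Pi.mul_apply]
  rw [inner_ee_right, ← C_eq]
  have h1 : (EuclideanSpace.single i (1:ℝ) : E) i = 1 := by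
    simp [EuclideanSpace.single_apply]
  rw [h1]
  ring

lemma sum_single_coord_mul (α : Fin m) (c : Fin m → ℝ) :
    ∑ i : Fin m, (EuclideanSpace.single i (1:ℝ) : E) α * c i = c α := by
  rw [Finset.sum_eq_single α]
  · simp [EuclideanSpace.single_apply]
  · intro b _ hb
    simp [EuclideanSpace.single_apply, Ne.symm hb]
  · simp

lemma sum_C_sq (x : E) : ∑ i : Fin m, (C a i x) ^ 2 = NN a x := by
  rw [NN]
  rw [PiLp.inner_apply]
  refine Finset.sum_congr rfl fun i _ => ?_
  rw [C_eq]
  simp [RCLike.inner_apply]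

lemma lap_phi_coord {r : ℝ} {φ : E → E}
    (hφdef : ∀ x, φ x = a + (r ^ 2 / ‖x - a‖ ^ 2) • (x - a)) (α : Fin m)
    {x : E} (hx : x ≠ a) :
    lap (fun y => φ y α) x = (4 - 2 * (m : ℝ)) * r ^ 2 * (NI a x) ^ 2 * C a α x := by
  have hev : ∀ i : Fin m,
      fderiv ℝ (fun y => fderiv ℝ (fun z => φ z α) y (EuclideanSpace.single i 1)) x
        (EuclideanSpace.single i 1) = fderiv ℝ (g1 a r α i) x (EuclideanSpace.single i 1) := by
    intro i
    have heq : (fun y => fderiv ℝ (fun z => φ z α) y (EuclideanSpace.single i 1))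
        =ᶠ[nhds x] g1 a r α i := by
      filter_upwards [compl_singleton_mem_nhds hx] with y hy
      exact fderiv_phi_coord_eq_g1 a hφdef α i hy
    rw [heq.fderiv_eq]
  rw [lap]
  have : ∀ i : Fin m,
      fderiv ℝ (fun y => fderiv ℝ (fun z => φ z α) y (EuclideanSpace.single i 1)) x
        (EuclideanSpace.single i 1) =
      (-4 * r ^ 2 * (NI a x) ^ 2) * ((EuclideanSpace.single i (1:ℝ) : E) α * C a i x)
      + (8 * r ^ 2 * (NI a x) ^ 3 * C a α x) * (C a i x) ^ 2
      + (-2 * r ^ 2 * (NI a x) ^ 2 * C a α x) := by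
    intro i
    rw [hev i, fderiv_g1_ee a α i hx]
    ring
  rw [Finset.sum_congr rfl fun i _ => this i]
  rw [Finset.sum_add_distrib, Finset.sum_add_distrib, ← Finset.mul_sum, ← Finset.mul_sum,
    sum_single_coord_mul, sum_C_sq, Finset.sum_const, Finset.card_univ, Fintype.card_fin,
    nsmul_eq_mul]
  have hNI : NI a x * NN a x = 1 := inv_mul_cancel₀ (NN_ne a hx)
  linear_combination (8 * r ^ 2 * (NI a x) ^ 2 * C a α x) * hNI

lemma f_rw {r : ℝ} {f : E → ℝ} (hfdef : ∀ x, f x = (r / ‖x - a‖) ^ (2 * (m - 2)))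
    (x : E) : f x = r ^ (2 * (m - 2)) * (NI a x) ^ (m - 2) := by
  rw [hfdef, div_pow, div_eq_mul_inv, NI, NN_eq]
  congr 1
  rw [pow_mul, inv_pow]

lemma hasFDerivAt_f {r : ℝ} {f : E → ℝ} (hfdef : ∀ x, f x = (r / ‖x - a‖) ^ (2 * (m - 2)))
    {x : E} (hx : x ≠ a) :
    HasFDerivAt f ((r ^ (2 * (m - 2)) * (m - 2 : ℕ) * (NI a x) ^ (m - 2 - 1) *
      (-2 * (NI a x) ^ 2)) • innerSL ℝ (x - a)) x := by
  have hrw : f = fun y => r ^ (2 * (m - 2)) * (NI a y) ^ (m - 2) := funext (f_rw a hfdef)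
  rw [hrw]
  have h := ((hasDerivAt_pow (m - 2) (NI a x)).comp_hasFDerivAt x
    (hasFDerivAt_NI a hx)).const_mul (r ^ (2 * (m - 2)))
  refine h.congr_fderiv (Eq.symm ?_)
  refine ContinuousLinearMap.ext fun v => ?_
  simp only [ContinuousLinearMap.smul_apply, ContinuousLinearMap.coe_smul', Pi.smul_apply,
    innerSL_apply_apply, smul_eq_mul]
  ring

lemma gradient_f {r : ℝ} {f : E → ℝ} (hfdef : ∀ x, f x = (r / ‖x - a‖) ^ (2 * (m - 2)))
    {x : E} (hx : x ≠ a) :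
    gradient f x = (r ^ (2 * (m - 2)) * (m - 2 : ℕ) * (NI a x) ^ (m - 2 - 1) *
      (-2 * (NI a x) ^ 2)) • (x - a) := by
  refine HasGradientAt.gradient ?_
  rw [hasGradientAt_iff_hasFDerivAt]
  refine (hasFDerivAt_f a hfdef hx).congr_fderiv (Eq.symm ?_)
  refine ContinuousLinearMap.ext fun v => ?_
  simp only [InnerProductSpace.toDual_apply_apply, ContinuousLinearMap.smul_apply, innerSL_apply_apply,
    smul_eq_mul, real_inner_smul_left]

lemma gradient_phi_coord {r : ℝ} {φ : E → E}
    (hφdef : ∀ x, φ x = a + (r ^ 2 / ‖x - a‖ ^ 2) • (x - a)) (α : Fin m)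
    {x : E} (hx : x ≠ a) :
    gradient (fun y => φ y α) x = (r ^ 2 * NI a x) • (EuclideanSpace.single α (1:ℝ)) +
      (-2 * r ^ 2 * (NI a x) ^ 2 * C a α x) • (x - a) := by
  refine HasGradientAt.gradient ?_
  rw [hasGradientAt_iff_hasFDerivAt]
  refine (hasFDerivAt_phi_coord a hφdef α hx).congr_fderiv (Eq.symm ?_)
  refine ContinuousLinearMap.ext fun v => ?_
  simp only [InnerProductSpace.toDual_apply_apply, ContinuousLinearMap.add_apply,
    ContinuousLinearMap.smul_apply, innerSL_apply_apply, smul_eq_mul, proj_apply',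
    inner_add_left, real_inner_smul_left]
  rw [inner_ee_left]

lemma part2 {r : ℝ} (hm : 3 ≤ m) {φ : E → E} {f : E → ℝ}
    (hφdef : ∀ x, φ x = a + (r ^ 2 / ‖x - a‖ ^ 2) • (x - a))
    (hfdef : ∀ x, f x = (r / ‖x - a‖) ^ (2 * (m - 2)))
    (α : Fin m) (x : E) (hx : x ≠ a) :
    f x * lap (fun y => φ y α) x +
      ⟪gradient f x, gradient (fun y => φ y α) x⟫ = 0 := by
  have hNI : NI a x * NN a x = 1 := inv_mul_cancel₀ (NN_ne a hx)
  have hk : m - 2 - 1 + 1 = m - 2 := by omega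
  have e1 : (NI a x) ^ (m - 2) = (NI a x) ^ (m - 2 - 1) * NI a x := by
    rw [← pow_succ, hk]
  have hkr : ((m - 2 : ℕ) : ℝ) = (m : ℝ) - 2 := by
    have h2 : (2 : ℕ) ≤ m := by omega
    push_cast [Nat.cast_sub h2]
    ring
  rw [f_rw a hfdef, lap_phi_coord a hφdef α hx, gradient_f a hfdef hx,
    gradient_phi_coord a hφdef α hx]
  simp only [inner_add_right, real_inner_smul_left, real_inner_smul_right]
  rw [inner_ee_right, ← C_eq]
  have hNNi : (⟪x - a, x - a⟫ : ℝ) = NN a x := rfl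
  rw [hNNi, e1, hkr]
  linear_combination (4 * ((m : ℝ) - 2) * r ^ (2 * (m - 2)) * r ^ 2 * C a α x *
    (NI a x) ^ (m - 2 - 1) * (NI a x) ^ 3) * hNI

lemma clm_expand (L : E →L[ℝ] ℝ) (v : E) :
    L v = ∑ j : Fin m, v j * L (EuclideanSpace.single j 1) := by
  conv_lhs => rw [← sum_coord_smul_single v]
  rw [map_sum]
  simp [smul_eq_mul]

lemma trace_conformal (B : E →L[ℝ] E →L[ℝ] ℝ) (A : E →L[ℝ] E) (μ : ℝ)
    (hsym : ∀ u v : E, ⟪A u, v⟫ = ⟪u, A v⟫)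
    (hconf : ∀ u v : E, ⟪A u, A v⟫ = μ * ⟪u, v⟫) :
    ∑ i : Fin m, B (A (EuclideanSpace.single i 1)) (A (EuclideanSpace.single i 1)) =
      μ * ∑ j : Fin m, B (EuclideanSpace.single j 1) (EuclideanSpace.single j 1) := by
  have hcoord : ∀ (i j : Fin m), (A (EuclideanSpace.single i 1)) j =
      (A (EuclideanSpace.single j 1)) i := by
    intro i j
    rw [← inner_ee_right (A (EuclideanSpace.single i 1)) j, hsym, real_inner_comm,
      inner_ee_right]
  have clm2_expand : ∀ (v w : E), B v w = ∑ j : Fin m, ∑ k : Fin m,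
      v j * (w k * B (EuclideanSpace.single j 1) (EuclideanSpace.single k 1)) := by
    intro v w
    have h1 : B v = ∑ j : Fin m, v j • B (EuclideanSpace.single j 1) := by
      conv_lhs => rw [← sum_coord_smul_single v]
      rw [map_sum]
      simp only [map_smul]
    rw [h1, ContinuousLinearMap.sum_apply]
    refine Finset.sum_congr rfl fun j _ => ?_
    rw [ContinuousLinearMap.smul_apply, smul_eq_mul,
      clm_expand (B (EuclideanSpace.single j 1)) w, Finset.mul_sum]
  have hexp : ∀ i : Fin m, B (A (EuclideanSpace.single i 1)) (A (EuclideanSpace.single i 1))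
      = ∑ j : Fin m, ∑ k : Fin m, (A (EuclideanSpace.single j 1)) i *
        ((A (EuclideanSpace.single k 1)) i * B (EuclideanSpace.single j 1)
          (EuclideanSpace.single k 1)) := by
    intro i
    rw [clm2_expand (A (EuclideanSpace.single i 1)) (A (EuclideanSpace.single i 1))]
    refine Finset.sum_congr rfl fun j _ => ?_
    refine Finset.sum_congr rfl fun k _ => ?_
    rw [hcoord i j, hcoord i k]
  rw [Finset.sum_congr rfl fun i _ => hexp i]
  rw [Finset.sum_comm]
  rw [Finset.mul_sum]
  refine Finset.sum_congr rfl fun j _ => ?_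
  rw [Finset.sum_comm]
  have hinner : ∀ k : Fin m, ∑ i : Fin m, (A (EuclideanSpace.single j 1)) i *
      (A (EuclideanSpace.single k 1)) i
      = μ * (⟪(EuclideanSpace.single j (1:ℝ) : E), EuclideanSpace.single k 1⟫ : ℝ) := by
    intro k
    rw [← hconf]
    rw [PiLp.inner_apply]
    simp [RCLike.inner_apply]
    exact Finset.sum_congr rfl fun _ _ => mul_comm _ _
  calc ∑ k : Fin m, ∑ i : Fin m, (A (EuclideanSpace.single j 1)) i *
        ((A (EuclideanSpace.single k 1)) i * B (EuclideanSpace.single j 1)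
          (EuclideanSpace.single k 1))
      = ∑ k : Fin m, (∑ i : Fin m, (A (EuclideanSpace.single j 1)) i *
          (A (EuclideanSpace.single k 1)) i) * B (EuclideanSpace.single j 1)
            (EuclideanSpace.single k 1) := by
        refine Finset.sum_congr rfl fun k _ => ?_
        rw [Finset.sum_mul]
        refine Finset.sum_congr rfl fun i _ => ?_
        ring
    _ = ∑ k : Fin m, (μ * (⟪(EuclideanSpace.single j (1:ℝ) : E),
          EuclideanSpace.single k 1⟫ : ℝ)) * B (EuclideanSpace.single j 1)
            (EuclideanSpace.single k 1) := by
        refine Finset.sum_congr rfl fun k _ => ?_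
        rw [hinner k]
    _ = μ * B (EuclideanSpace.single j 1) (EuclideanSpace.single j 1) := by
        rw [Finset.sum_eq_single j]
        · rw [inner_ee_left]
          simp [EuclideanSpace.single_apply]
        · intro b _ hb
          rw [inner_ee_left]
          simp [EuclideanSpace.single_apply, Ne.symm hb]
        · simp

noncomputable def QQ (a : E) (r : ℝ) (i : Fin m) : E → E :=
  fun y => (r ^ 2 * NI a y) • (EuclideanSpace.single i (1:ℝ) : E) +
    (-2 * r ^ 2 * ((NI a y * NI a y) * C a i y)) • (y - a)

lemma Aφ_ee_eq_QQ (r : ℝ) (i : Fin m) (y : E) :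
    Aφ a r y (EuclideanSpace.single i 1) = QQ a r i y := by
  rw [Aφ_apply, QQ]
  rw [inner_ee_right, ← C_eq]
  ring_nf

noncomputable def QD (a : E) (r : ℝ) (i : Fin m) (x : E) : E →L[ℝ] E :=
  ((-2 * r ^ 2 * (NI a x) ^ 2) • innerSL ℝ (x - a)).smulRight
      (EuclideanSpace.single i (1:ℝ) : E)
    + ((-2 * r ^ 2 * ((NI a x) ^ 2 * C a i x)) • ContinuousLinearMap.id ℝ E
    + (((8 * r ^ 2 * (NI a x) ^ 3 * C a i x) • innerSL ℝ (x - a)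
        + (-2 * r ^ 2 * (NI a x) ^ 2) • (EuclideanSpace.proj i : E →L[ℝ] ℝ)).smulRight (x - a)))

lemma QD_apply (r : ℝ) (i : Fin m) (x v : E) :
    QD a r i x v = (-2 * r ^ 2 * (NI a x) ^ 2 * ⟪x - a, v⟫) •
        (EuclideanSpace.single i (1:ℝ) : E)
      + (-2 * r ^ 2 * ((NI a x) ^ 2 * C a i x)) • v
      + (8 * r ^ 2 * (NI a x) ^ 3 * C a i x * ⟪x - a, v⟫ - 2 * r ^ 2 * (NI a x) ^ 2 * v i)
          • (x - a) := by
  simp only [QD, ContinuousLinearMap.add_apply, ContinuousLinearMap.smul_apply,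
    ContinuousLinearMap.smulRight_apply, ContinuousLinearMap.id_apply, innerSL_apply_apply,
    smul_eq_mul, ContinuousLinearMap.coe_smul', Pi.smul_apply, proj_apply']
  module

lemma hasFDerivAt_QQ {r : ℝ} (i : Fin m) {x : E} (hx : x ≠ a) :
    HasFDerivAt (QQ a r i) (QD a r i x) x := by
  have hNI := hasFDerivAt_NI a hx
  have h := ((hNI.const_mul (r ^ 2)).smul
      (hasFDerivAt_const (EuclideanSpace.single i (1:ℝ) : E) x)).add
    (((((hNI.mul hNI).mul (hasFDerivAt_C a i x))).const_mul (-2 * r ^ 2)).smul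
      ((hasFDerivAt_id x).sub_const a))
  refine h.congr_fderiv (Eq.symm ?_)
  refine ContinuousLinearMap.ext fun v => ?_
  rw [QD_apply]
  simp only [ContinuousLinearMap.add_apply, ContinuousLinearMap.smul_apply,
    ContinuousLinearMap.smulRight_apply, ContinuousLinearMap.id_apply, innerSL_apply_apply,
    smul_eq_mul, ContinuousLinearMap.coe_smul', Pi.smul_apply, proj_apply',
    ContinuousLinearMap.zero_apply, id_eq, Pi.mul_apply]
  module

lemma sum_QD_ee {r : ℝ} {x : E} (hx : x ≠ a) :
    ∑ i : Fin m, QD a r i x (EuclideanSpace.single i 1) =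
      ((4 - 2 * (m : ℝ)) * r ^ 2 * (NI a x) ^ 2) • (x - a) := by
  have hNI : NI a x * NN a x = 1 := inv_mul_cancel₀ (NN_ne a hx)
  have hterm : ∀ i : Fin m, QD a r i x (EuclideanSpace.single i 1) =
      (-4 * r ^ 2 * (NI a x) ^ 2) • (C a i x • (EuclideanSpace.single i (1:ℝ) : E))
      + (8 * r ^ 2 * (NI a x) ^ 3 * (C a i x) ^ 2 - 2 * r ^ 2 * (NI a x) ^ 2) • (x - a) := by
    intro i
    rw [QD_apply, inner_ee_right, ← C_eq]
    have h1 : (EuclideanSpace.single i (1:ℝ) : E) i = 1 := by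
      simp [EuclideanSpace.single_apply]
    rw [h1, smul_smul]
    module
  rw [Finset.sum_congr rfl fun i _ => hterm i, Finset.sum_add_distrib, ← Finset.smul_sum]
  have h2 : ∑ i : Fin m, C a i x • (EuclideanSpace.single i (1:ℝ) : E) = x - a := by
    rw [Finset.sum_congr rfl fun i (_ : i ∈ Finset.univ) => by rw [C_eq a i x]]
    exact sum_coord_smul_single (x - a)
  rw [h2, ← Finset.sum_smul]
  rw [Finset.sum_sub_distrib, ← Finset.mul_sum, sum_C_sq, Finset.sum_const, Finset.card_univ,
    Fintype.card_fin, nsmul_eq_mul]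
  rw [← add_smul]
  congr 1
  linear_combination (8 * r ^ 2 * (NI a x) ^ 2) * hNI

set_option maxHeartbeats 1000000 in
lemma part3 {r : ℝ} (hm : 3 ≤ m) {φ : E → E} {f : E → ℝ}
    (hφdef : ∀ x, φ x = a + (r ^ 2 / ‖x - a‖ ^ 2) • (x - a))
    (hfdef : ∀ x, f x = (r / ‖x - a‖) ^ (2 * (m - 2)))
    (V : Set E) (hV : IsOpen V) (u : E → ℝ) (hu : ContDiffOn ℝ 2 u V)
    (hharm : ∀ y ∈ V, lap u y = 0) (x : E) (hx : x ≠ a) (hxV : φ x ∈ V) :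
    f x * lap (fun y => u (φ y)) x +
      ⟪gradient f x, gradient (fun y => u (φ y)) x⟫ = 0 := by
  have hφx := hasFDerivAt_phi a hφdef hx
  have hcont : ContinuousAt φ x := hφx.differentiableAt.continuousAt
  have h1 : {y : E | y ≠ a} ∈ nhds x := compl_singleton_mem_nhds hx
  have h2 : φ ⁻¹' V ∈ nhds x := hcont.preimage_mem_nhds (hV.mem_nhds hxV)
  have hud : ∀ y : E, φ y ∈ V → DifferentiableAt ℝ u (φ y) := fun y hy =>
    (hu.contDiffAt (hV.mem_nhds hy)).differentiableAt two_ne_zero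
  -- second derivative data of u at φ x
  have hc2 : ContDiffAt ℝ 2 u (φ x) := hu.contDiffAt (hV.mem_nhds hxV)
  have hc1 : ContDiffAt ℝ 1 (fderiv ℝ u) (φ x) := hc2.fderiv_right (by norm_num)
  set H := fderiv ℝ (fderiv ℝ u) (φ x) with hHdef
  have hH : HasFDerivAt (fderiv ℝ u) H (φ x) :=
    (hc1.differentiableAt one_ne_zero).hasFDerivAt
  have hc : HasFDerivAt (fun y => fderiv ℝ u (φ y)) (H.comp (Aφ a r x)) x :=
    hH.comp x hφx
  -- the laplacian of the composition
  have hlapval : ∀ i : Fin m,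
      fderiv ℝ (fun y => fderiv ℝ (fun z => u (φ z)) y (EuclideanSpace.single i 1)) x
        (EuclideanSpace.single i 1) =
      fderiv ℝ u (φ x) (QD a r i x (EuclideanSpace.single i 1)) +
        H (Aφ a r x (EuclideanSpace.single i 1)) (Aφ a r x (EuclideanSpace.single i 1)) := by
    intro i
    have hev : (fun y => fderiv ℝ (fun z => u (φ z)) y (EuclideanSpace.single i 1))
        =ᶠ[nhds x] (fun y => fderiv ℝ u (φ y) (QQ a r i y)) := by
      filter_upwards [h1, h2] with y hy1 hy2
      have hcomp : HasFDerivAt (fun z => u (φ z))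
          ((fderiv ℝ u (φ y)).comp (Aφ a r y)) y :=
        ((hud y hy2).hasFDerivAt).comp y (hasFDerivAt_phi a hφdef hy1)
      rw [hcomp.fderiv, ContinuousLinearMap.comp_apply, Aφ_ee_eq_QQ]
    rw [hev.fderiv_eq]
    have hApp := hc.clm_apply (hasFDerivAt_QQ a (r := r) i hx)
    rw [hApp.fderiv]
    simp only [ContinuousLinearMap.add_apply, ContinuousLinearMap.comp_apply,
      ContinuousLinearMap.flip_apply]
    rw [← Aφ_ee_eq_QQ]
  have hlapu : ∑ j : Fin m, H (EuclideanSpace.single j 1) (EuclideanSpace.single j 1) = 0 := by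
    have : ∀ j : Fin m,
        fderiv ℝ (fun y => fderiv ℝ u y (EuclideanSpace.single j 1)) (φ x)
          (EuclideanSpace.single j 1) = H (EuclideanSpace.single j 1)
            (EuclideanSpace.single j 1) := by
      intro j
      have h := hH.clm_apply (hasFDerivAt_const (EuclideanSpace.single j (1:ℝ) : E) (φ x))
      rw [h.fderiv]
      simp
    rw [← Finset.sum_congr rfl fun j _ => this j]
    exact hharm (φ x) hxV
  have hlap : lap (fun y => u (φ y)) x =
      fderiv ℝ u (φ x) (((4 - 2 * (m : ℝ)) * r ^ 2 * (NI a x) ^ 2) • (x - a)) := by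
    rw [lap, Finset.sum_congr rfl fun i _ => hlapval i, Finset.sum_add_distrib,
      ← map_sum, sum_QD_ee a hx,
      trace_conformal H (Aφ a r x) ((r ^ 2 * NI a x) ^ 2) (Aφ_symm a x)
        (Aφ_conformal a hx), hlapu, mul_zero, add_zero]
  -- the gradient term
  have hgrad : (⟪gradient f x, gradient (fun y => u (φ y)) x⟫ : ℝ) =
      fderiv ℝ (fun y => u (φ y)) x (gradient f x) := by
    rw [real_inner_comm]
    simp [gradient, InnerProductSpace.toDual_symm_apply]
  have hfd : fderiv ℝ (fun y => u (φ y)) x = (fderiv ℝ u (φ x)).comp (Aφ a r x) :=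
    (((hud x hxV).hasFDerivAt).comp x hφx).fderiv
  set S := r ^ (2 * (m - 2)) * ((m - 2 : ℕ) : ℝ) * (NI a x) ^ (m - 2 - 1) *
    (-2 * (NI a x) ^ 2) with hSdef
  have hgf : gradient f x = S • (x - a) := gradient_f a hfdef hx
  have hAgf : Aφ a r x (S • (x - a)) =
      ((r ^ 2 * NI a x) * S + (-2 * r ^ 2 * (NI a x) ^ 2 * (S * NN a x))) • (x - a) := by
    rw [Aφ_apply]
    rw [real_inner_smul_right]
    have hNNi : (⟪x - a, x - a⟫ : ℝ) = NN a x := rfl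
    rw [hNNi, smul_smul]
    module
  -- assemble
  rw [hlap, hgrad, hfd, hgf, ContinuousLinearMap.comp_apply, hAgf, f_rw a hfdef x]
  rw [ContinuousLinearMap.map_smul, ContinuousLinearMap.map_smul]
  rw [smul_eq_mul, smul_eq_mul]
  set D := fderiv ℝ u (φ x) (x - a) with hDdef
  have hNI : NI a x * NN a x = 1 := inv_mul_cancel₀ (NN_ne a hx)
  have hk : m - 2 - 1 + 1 = m - 2 := by omega
  have e1 : (NI a x) ^ (m - 2) = (NI a x) ^ (m - 2 - 1) * NI a x := by
    rw [← pow_succ, hk]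
  have hkr : ((m - 2 : ℕ) : ℝ) = (m : ℝ) - 2 := by
    have h2' : (2 : ℕ) ≤ m := by omega
    push_cast [Nat.cast_sub h2']
    ring
  rw [hSdef, e1, hkr]
  linear_combination (4 * ((m : ℝ) - 2) * r ^ (2 * (m - 2)) * r ^ 2 *
    (NI a x) ^ (m - 2 - 1) * (NI a x) ^ 3 * D) * hNI

end Aux

/-- The Möbius inversion `φ(x) = a + (r²/|x−a|²)(x−a)` is an `f`-harmonic morphism
with `f(x) = (r/|x−a|)^(2(m−2))`. -/
theorem stmt11 {m : ℕ} (hm : 3 ≤ m) (a : EuclideanSpace ℝ (Fin m)) (r : ℝ) (hr : 0 < r)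
    (φ : EuclideanSpace ℝ (Fin m) → EuclideanSpace ℝ (Fin m))
    (hφdef : ∀ x, φ x = a + (r ^ 2 / ‖x - a‖ ^ 2) • (x - a))
    (f : EuclideanSpace ℝ (Fin m) → ℝ)
    (hfdef : ∀ x, f x = (r / ‖x - a‖) ^ (2 * (m - 2))) :
    -- (i) `φ` is conformal with dilation `r²/‖x−a‖²`
    (∀ x, x ≠ a → ∀ u v : EuclideanSpace ℝ (Fin m),
      ⟪fderiv ℝ φ x u, fderiv ℝ φ x v⟫ = (r ^ 2 / ‖x - a‖ ^ 2) ^ 2 * ⟪u, v⟫) ∧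
    -- (ii) `φ` is an `f`-harmonic map on `ℝ^m \ {a}`
    (∀ α : Fin m, ∀ x, x ≠ a →
      f x * lap (fun y => φ y α) x +
        ⟪gradient f x, gradient (fun y => φ y α) x⟫ = 0) ∧
    -- consequently, `φ` is an `f`-harmonic morphism on `ℝ^m \ {a}`
    (∀ V : Set (EuclideanSpace ℝ (Fin m)), IsOpen V →
      ∀ u : EuclideanSpace ℝ (Fin m) → ℝ, ContDiffOn ℝ 2 u V →
      (∀ y ∈ V, lap u y = 0) →
      ({a}ᶜ ∩ φ ⁻¹' V).Nonempty →
      ∀ x, x ≠ a → φ x ∈ V →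
        f x * lap (fun y => u (φ y)) x +
          ⟪gradient f x, gradient (fun y => u (φ y)) x⟫ = 0) := by
  refine ⟨?_, ?_, ?_⟩
  · intro x hx u v
    have hdiv : r ^ 2 / ‖x - a‖ ^ 2 = r ^ 2 * NI a x := by
      rw [div_eq_mul_inv]
      simp only [NI]
      rw [NN_eq]
    rw [(hasFDerivAt_phi a hφdef hx).fderiv, Aφ_conformal a hx, hdiv]
  · intro α x hx
    exact part2 a hm hφdef hfdef α x hx
  · intro V hV u hu hharm _ x hx hxV
    exact part3 a hm hφdef hfdef V hV u hu hharm x hx hxV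
end

section
/- Define ψ : ℝ³ → ℝ² by ψ(x, y, z) = (3x, xy) and f : ℝ³ → (0,∞) by f(x, y, z) = e^z. Then: (i) ψ is an f-harmonic map, i.e., f·Δψ^α + ⟨∇f, ∇ψ^α⟩ = 0 on ℝ³ for α = 1, 2; and (ii) ψ is not horizontally weakly conformal: one has ⟨∇ψ¹(x,y,z), ∇ψ²(x,y,z)⟩ = 3y, which is nonzero whenever y ≠ 0, so there is no function λ : ℝ³ → [0,∞) with ⟨∇ψ^α, ∇ψ^β⟩ = λ²·δ^{αβ} for all α, β. -/
open scoped RealInnerProductSpace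

local notation "E3" => EuclideanSpace ℝ (Fin 3)

lemma hfd1 (v : E3) : HasFDerivAt (fun w : E3 => 3 * w 0)
    ((3:ℝ) • (EuclideanSpace.proj (0:Fin 3) : E3 →L[ℝ] ℝ)) v :=
  (EuclideanSpace.proj (0:Fin 3) : E3 →L[ℝ] ℝ).hasFDerivAt.const_mul 3

lemma hfd2 (v : E3) : HasFDerivAt (fun w : E3 => w 0 * w 1)
    (v 0 • (EuclideanSpace.proj (1:Fin 3) : E3 →L[ℝ] ℝ)
      + v 1 • (EuclideanSpace.proj (0:Fin 3) : E3 →L[ℝ] ℝ)) v :=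
  (EuclideanSpace.proj (0:Fin 3) : E3 →L[ℝ] ℝ).hasFDerivAt.mul
    (EuclideanSpace.proj (1:Fin 3) : E3 →L[ℝ] ℝ).hasFDerivAt

lemma hfdf (v : E3) : HasFDerivAt (fun w : E3 => Real.exp (w 2))
    (Real.exp (v 2) • (EuclideanSpace.proj (2:Fin 3) : E3 →L[ℝ] ℝ)) v :=
  (Real.hasDerivAt_exp (v 2)).comp_hasFDerivAt (f := fun w : E3 => w 2) v
    (EuclideanSpace.proj (2:Fin 3) : E3 →L[ℝ] ℝ).hasFDerivAt

lemma grad1 (v : E3) : HasGradientAt (fun w : E3 => 3 * w 0)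
    (EuclideanSpace.single (0:Fin 3) (3:ℝ)) v := by
  rw [hasGradientAt_iff_hasFDerivAt]
  refine (hfd1 v).congr_fderiv ?_
  ext w
  simp [InnerProductSpace.toDual_apply_apply, EuclideanSpace.inner_single_left]

lemma grad2 (v : E3) : HasGradientAt (fun w : E3 => w 0 * w 1)
    (EuclideanSpace.single (0:Fin 3) (v 1) + EuclideanSpace.single (1:Fin 3) (v 0)) v := by
  rw [hasGradientAt_iff_hasFDerivAt]
  refine (hfd2 v).congr_fderiv ?_
  ext w
  simp [InnerProductSpace.toDual_apply_apply, inner_add_left, EuclideanSpace.inner_single_left]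
  ring

lemma gradf (v : E3) : HasGradientAt (fun w : E3 => Real.exp (w 2))
    (EuclideanSpace.single (2:Fin 3) (Real.exp (v 2))) v := by
  rw [hasGradientAt_iff_hasFDerivAt]
  refine (hfdf v).congr_fderiv ?_
  ext w
  simp [InnerProductSpace.toDual_apply_apply, EuclideanSpace.inner_single_left]

lemma lap1 : ∀ v, lap (fun w : E3 => 3 * w 0) v = 0 := by
  intro v
  have hf : ∀ y : E3, fderiv ℝ (fun w : E3 => 3 * w 0) y
      = (3:ℝ) • (EuclideanSpace.proj (0:Fin 3) : E3 →L[ℝ] ℝ) := fun y => (hfd1 y).fderiv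
  unfold lap
  apply Finset.sum_eq_zero
  intro i _
  have : (fun y : E3 => fderiv ℝ (fun w : E3 => 3 * w 0) y (EuclideanSpace.single i 1))
      = fun _ : E3 => 3 * (EuclideanSpace.single i (1:ℝ) : E3) 0 := by
    funext y; rw [hf y]; simp
  rw [this, fderiv_fun_const]
  simp

lemma lap2 : ∀ v, lap (fun w : E3 => w 0 * w 1) v = 0 := by
  intro v
  have hf : ∀ y : E3, fderiv ℝ (fun w : E3 => w 0 * w 1) y
      = y 0 • (EuclideanSpace.proj (1:Fin 3) : E3 →L[ℝ] ℝ)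
        + y 1 • (EuclideanSpace.proj (0:Fin 3) : E3 →L[ℝ] ℝ) := fun y => (hfd2 y).fderiv
  unfold lap
  apply Finset.sum_eq_zero
  intro i _
  have h1 : (fun y : E3 => fderiv ℝ (fun w : E3 => w 0 * w 1) y (EuclideanSpace.single i 1))
      = fun y : E3 => y 0 * (EuclideanSpace.single i (1:ℝ) : E3) 1
        + y 1 * (EuclideanSpace.single i (1:ℝ) : E3) 0 := by
    funext y; rw [hf y]; simp
  rw [h1]
  have h2 : HasFDerivAt (fun y : E3 => y 0 * (EuclideanSpace.single i (1:ℝ) : E3) 1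
        + y 1 * (EuclideanSpace.single i (1:ℝ) : E3) 0)
      (((EuclideanSpace.single i (1:ℝ) : E3) 1) • (EuclideanSpace.proj (0:Fin 3) : E3 →L[ℝ] ℝ)
        + ((EuclideanSpace.single i (1:ℝ) : E3) 0) • (EuclideanSpace.proj (1:Fin 3) : E3 →L[ℝ] ℝ)) v := by
    exact ((EuclideanSpace.proj (0:Fin 3) : E3 →L[ℝ] ℝ).hasFDerivAt.mul_const _).add
      ((EuclideanSpace.proj (1:Fin 3) : E3 →L[ℝ] ℝ).hasFDerivAt.mul_const _)
  rw [h2.fderiv]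
  fin_cases i <;>
    simp [EuclideanSpace.single_apply]

/-- `ψ(x,y,z) = (3x, xy)` is an `e^z`-harmonic map which is not horizontally
weakly conformal. -/
theorem stmt12 (ψ : EuclideanSpace ℝ (Fin 3) → EuclideanSpace ℝ (Fin 2))
    (hψdef : ∀ v, ψ v 0 = 3 * v 0 ∧ ψ v 1 = v 0 * v 1)
    (f : EuclideanSpace ℝ (Fin 3) → ℝ)
    (hfdef : ∀ v, f v = Real.exp (v 2)) :
    -- (i) `ψ` is an `f`-harmonic map
    (∀ α : Fin 2, ∀ v,
      f v * lap (fun w => ψ w α) v +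
        ⟪gradient f v, gradient (fun w => ψ w α) v⟫ = 0) ∧
    -- (ii) `⟨∇ψ¹, ∇ψ²⟩ = 3y`
    (∀ v, ⟪gradient (fun w => ψ w 0) v, gradient (fun w => ψ w 1) v⟫ = 3 * v 1) ∧
    -- (iii) `ψ` is not horizontally weakly conformal
    ¬ ∃ lam : EuclideanSpace ℝ (Fin 3) → ℝ, ∀ v, ∀ α β : Fin 2,
        ⟪gradient (fun w => ψ w α) v, gradient (fun w => ψ w β) v⟫ =
          lam v ^ 2 * (if α = β then 1 else 0) := by
  have hψ0 : (fun w => ψ w 0) = fun w : E3 => 3 * w 0 := funext fun w => (hψdef w).1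
  have hψ1 : (fun w => ψ w 1) = fun w : E3 => w 0 * w 1 := funext fun w => (hψdef w).2
  have hff : f = fun w : E3 => Real.exp (w 2) := funext hfdef
  have g0 : ∀ v, gradient (fun w => ψ w 0) v = EuclideanSpace.single (0:Fin 3) (3:ℝ) := by
    intro v; rw [hψ0]; exact (grad1 v).gradient
  have g1 : ∀ v, gradient (fun w => ψ w 1) v
      = EuclideanSpace.single (0:Fin 3) (v 1) + EuclideanSpace.single (1:Fin 3) (v 0) := by
    intro v; rw [hψ1]; exact (grad2 v).gradient
  have gf : ∀ v, gradient f v = EuclideanSpace.single (2:Fin 3) (Real.exp (v 2)) := by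
    intro v; rw [hff]; exact (gradf v).gradient
  have key2 : ∀ v : E3, ⟪gradient (fun w => ψ w 0) v, gradient (fun w => ψ w 1) v⟫ = 3 * v 1 := by
    intro v
    rw [g0 v, g1 v]
    simp [inner_add_right, EuclideanSpace.inner_single_left, EuclideanSpace.single_apply]
  refine ⟨?_, key2, ?_⟩
  · intro α v
    fin_cases α
    · show f v * lap (fun w => ψ w 0) v + ⟪gradient f v, gradient (fun w => ψ w 0) v⟫ = 0
      rw [g0, gf, hψ0, lap1]
      simp [EuclideanSpace.inner_single_left, EuclideanSpace.single_apply]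
    · show f v * lap (fun w => ψ w 1) v + ⟪gradient f v, gradient (fun w => ψ w 1) v⟫ = 0
      rw [g1, gf, hψ1, lap2]
      simp [inner_add_right, EuclideanSpace.inner_single_left, EuclideanSpace.single_apply]
  · rintro ⟨lam, hlam⟩
    have h := hlam (EuclideanSpace.single (1:Fin 3) 1) 0 1
    rw [key2 (EuclideanSpace.single (1:Fin 3) 1)] at h
    simp [EuclideanSpace.single_apply] at h
end

section
/- Define φ : ℝ³ → ℝ² by φ(x, y, z) = (x, y + z) and f : ℝ³ → (0,∞) by f(x, y, z) = e^{y−z}. Then: (i) φ is an f-harmonic map, i.e., f·Δφ^α + ⟨∇f, ∇φ^α⟩ = 0 on ℝ³ for α = 1, 2; (ii) φ is a submersion, i.e., the derivative Dφ_p : ℝ³ → ℝ² is surjective at every point p; and (iii) φ is not horizontally weakly conformal: |∇φ¹|² = 1 while |∇φ²|² = 2 at every point, so there is no function λ : ℝ³ → [0,∞) with ⟨∇φ^α, ∇φ^β⟩ = λ²·δ^{αβ} for all α, β. -/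
open scoped RealInnerProductSpace

lemma lap_clm {m : ℕ} (L : EuclideanSpace ℝ (Fin m) →L[ℝ] ℝ)
    (x : EuclideanSpace ℝ (Fin m)) : lap ⇑L x = 0 := by
  unfold lap
  have h : ∀ w : EuclideanSpace ℝ (Fin m),
      (fun y => fderiv ℝ (⇑L) y w) = fun _ => L w := by
    intro w; funext y; rw [L.fderiv]
  refine Finset.sum_eq_zero fun i _ => ?_
  rw [h, fderiv_fun_const]
  simp

lemma gradient_clm {m : ℕ} (L : EuclideanSpace ℝ (Fin m) →L[ℝ] ℝ)
    (x : EuclideanSpace ℝ (Fin m)) :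
    gradient ⇑L x = (InnerProductSpace.toDual ℝ _).symm L := by
  unfold gradient; rw [L.fderiv]

noncomputable def Lphi : EuclideanSpace ℝ (Fin 3) →L[ℝ] EuclideanSpace ℝ (Fin 2) :=
  (EuclideanSpace.equiv (Fin 2) ℝ).symm.toContinuousLinearMap.comp
    (ContinuousLinearMap.pi
      ![EuclideanSpace.proj 0, EuclideanSpace.proj 1 + EuclideanSpace.proj 2])

lemma Lphi_apply (v : EuclideanSpace ℝ (Fin 3)) :
    Lphi v 0 = v 0 ∧ Lphi v 1 = v 1 + v 2 := by
  constructor <;> simp [Lphi]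

/-- `φ(x,y,z) = (x, y+z)` is an `e^{y−z}`-harmonic submersion which is not
horizontally weakly conformal. -/
theorem stmt13 (φ : EuclideanSpace ℝ (Fin 3) → EuclideanSpace ℝ (Fin 2))
    (hφdef : ∀ v, φ v 0 = v 0 ∧ φ v 1 = v 1 + v 2)
    (f : EuclideanSpace ℝ (Fin 3) → ℝ)
    (hfdef : ∀ v, f v = Real.exp (v 1 - v 2)) :
    -- (i) `φ` is an `f`-harmonic map
    (∀ α : Fin 2, ∀ v,
      f v * lap (fun w => φ w α) v +
        ⟪gradient f v, gradient (fun w => φ w α) v⟫ = 0) ∧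
    -- (ii) `φ` is a submersion
    (∀ p, Function.Surjective (fderiv ℝ φ p)) ∧
    -- (iii) `|∇φ¹|² = 1` and `|∇φ²|² = 2`, so `φ` is not horizontally weakly
    -- conformal
    (∀ v, ‖gradient (fun w => φ w 0) v‖ ^ 2 = 1 ∧
      ‖gradient (fun w => φ w 1) v‖ ^ 2 = 2) ∧
    ¬ ∃ lam : EuclideanSpace ℝ (Fin 3) → ℝ, ∀ v, ∀ α β : Fin 2,
        ⟪gradient (fun w => φ w α) v, gradient (fun w => φ w β) v⟫ =
          lam v ^ 2 * (if α = β then 1 else 0) := by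
    -- component functions are CLMs
  have hc0 : (fun w => φ w 0) = ⇑(EuclideanSpace.proj (0 : Fin 3)) :=
    funext fun w => (hφdef w).1
  have hc1 : (fun w => φ w 1)
      = ⇑((EuclideanSpace.proj (1 : Fin 3) + EuclideanSpace.proj (2 : Fin 3) :
          EuclideanSpace ℝ (Fin 3) →L[ℝ] ℝ)) := by
    funext w
    rw [(hφdef w).2]
    simp
  -- gradients
  have G0 : ∀ v, gradient (fun w => φ w 0) v = EuclideanSpace.single (0 : Fin 3) 1 := by
    intro v
    rw [hc0, gradient_clm]
    have h : EuclideanSpace.proj (0 : Fin 3)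
        = InnerProductSpace.toDual ℝ _ (EuclideanSpace.single (0 : Fin 3) 1) := by
      ext x
      simp [InnerProductSpace.toDual_apply_apply, EuclideanSpace.inner_single_left]
    rw [h, LinearIsometryEquiv.symm_apply_apply]
  have G1 : ∀ v, gradient (fun w => φ w 1) v
      = EuclideanSpace.single (1 : Fin 3) 1 + EuclideanSpace.single (2 : Fin 3) 1 := by
    intro v
    rw [hc1, gradient_clm]
    have h : (EuclideanSpace.proj (1 : Fin 3) + EuclideanSpace.proj (2 : Fin 3) :
          EuclideanSpace ℝ (Fin 3) →L[ℝ] ℝ)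
        = InnerProductSpace.toDual ℝ _
            (EuclideanSpace.single (1 : Fin 3) 1 + EuclideanSpace.single (2 : Fin 3) 1) := by
      ext x
      simp [InnerProductSpace.toDual_apply_apply, inner_add_left,
        EuclideanSpace.inner_single_left]
    rw [h, LinearIsometryEquiv.symm_apply_apply]
  -- derivative of f
  set L12 : EuclideanSpace ℝ (Fin 3) →L[ℝ] ℝ :=
    EuclideanSpace.proj (1 : Fin 3) - EuclideanSpace.proj (2 : Fin 3) with hL12
  have hfL : f = fun v => Real.exp (L12 v) := by
    funext v; simp [hfdef v, hL12]
  have hdf : ∀ v, fderiv ℝ f v = Real.exp (L12 v) • L12 := by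
    intro v
    rw [hfL]
    exact ((Real.hasDerivAt_exp (L12 v)).comp_hasFDerivAt v L12.hasFDerivAt).fderiv
  have key : ∀ v g, ⟪gradient f v, g⟫ = fderiv ℝ f v g := by
    intro v g
    exact InnerProductSpace.toDual_symm_apply
  refine ⟨?_, ?_, ?_, ?_⟩
  · -- (i)
    intro α v
    obtain rfl | rfl : α = 0 ∨ α = 1 := by omega
    · rw [G0 v, hc0, lap_clm, key]
      simp [hdf, hL12, EuclideanSpace.single_apply]
    · rw [G1 v, hc1, lap_clm, key]
      simp [hdf, hL12, EuclideanSpace.single_apply]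
  · -- (ii)
    intro p
    have hφL : φ = ⇑Lphi := by
      funext v
      ext i
      obtain rfl | rfl : i = 0 ∨ i = 1 := by omega
      · rw [(hφdef v).1, (Lphi_apply v).1]
      · rw [(hφdef v).2, (Lphi_apply v).2]
    rw [hφL, Lphi.fderiv]
    intro u
    refine ⟨EuclideanSpace.single 0 (u 0) + EuclideanSpace.single 1 (u 1), ?_⟩
    ext i
    obtain rfl | rfl : i = 0 ∨ i = 1 := by omega
    · rw [(Lphi_apply _).1]; simp [EuclideanSpace.single_apply]
    · rw [(Lphi_apply _).2]; simp [EuclideanSpace.single_apply]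
  · -- (iii)
    intro v
    constructor
    · rw [G0, EuclideanSpace.norm_single]; norm_num
    · rw [G1, ← real_inner_self_eq_norm_sq]
      rw [inner_add_left, inner_add_right, inner_add_right]
      simp [EuclideanSpace.inner_single_left, EuclideanSpace.single_apply]
      norm_num
  · -- (iv)
    rintro ⟨lam, hl⟩
    have h00 := hl 0 0 0
    have h11 := hl 0 1 1
    rw [G0, if_pos rfl] at h00
    rw [G1, if_pos rfl] at h11
    simp only [real_inner_self_eq_norm_sq] at h00 h11
    rw [← G0 0] at h00
    rw [← G1 0] at h11
    rw [(by rw [G0, EuclideanSpace.norm_single]; norm_num :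
      ‖gradient (fun w => φ w 0) (0 : EuclideanSpace ℝ (Fin 3))‖ ^ 2 = 1)] at h00
    have h2 : ‖gradient (fun w => φ w 1) (0 : EuclideanSpace ℝ (Fin 3))‖ ^ 2 = 2 := by
      rw [G1, ← real_inner_self_eq_norm_sq]
      rw [inner_add_left, inner_add_right, inner_add_right]
      simp [EuclideanSpace.inner_single_left, EuclideanSpace.single_apply]
      norm_num
    rw [h2] at h11
    nlinarith [h00, h11]
end

section
/- Let p : ℂ → ℂ be a polynomial and let α : ℝ → (0,∞) be a smooth function. Define φ : ℝ × ℂ → ℂ by φ(t, z) = p(z) and f : ℝ × ℂ → (0,∞) by f(t, z) = α(t), identifying ℝ × ℂ with ℝ³ and ℂ with ℝ². Then φ is an f-harmonic morphism: for every harmonic function u : V → ℝ on an open set V ⊆ ℂ with φ⁻¹(V) nonempty, the composition u∘φ satisfies f·Δ(u∘φ) + ⟨∇f, ∇(u∘φ)⟩ = 0 on φ⁻¹(V). -/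
open scoped RealInnerProductSpace

noncomputable def ellm : EuclideanSpace ℝ (Fin 3) →L[ℝ] ℂ :=
  Complex.ofRealCLM.comp (EuclideanSpace.proj 1) +
    Complex.I • Complex.ofRealCLM.comp (EuclideanSpace.proj 2)

lemma ellm_apply (v : EuclideanSpace ℝ (Fin 3)) : ellm v = v 1 + v 2 * Complex.I := by
  simp [ellm, mul_comm]

lemma ellm_single0 : ellm (EuclideanSpace.single 0 (1:ℝ)) = 0 := by
  simp [ellm, EuclideanSpace.single_apply]

lemma ellm_single1 : ellm (EuclideanSpace.single 1 (1:ℝ)) = 1 := by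
  simp [ellm, EuclideanSpace.single_apply]

lemma ellm_single2 : ellm (EuclideanSpace.single 2 (1:ℝ)) = Complex.I := by
  simp [ellm, EuclideanSpace.single_apply]

noncomputable def cm : ℂ →L[ℝ] EuclideanSpace ℝ (Fin 2) :=
  ((PiLp.continuousLinearEquiv 2 ℝ (fun _ : Fin 2 => ℝ)).symm :
      (Fin 2 → ℝ) →L[ℝ] EuclideanSpace ℝ (Fin 2)).comp
    (ContinuousLinearMap.pi ![Complex.reCLM, Complex.imCLM])

lemma cm_apply0 (z : ℂ) : cm z 0 = z.re := rfl
lemma cm_apply1 (z : ℂ) : cm z 1 = z.im := rfl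

lemma cm_decomp (z : ℂ) : cm z = z.re • EuclideanSpace.single 0 (1:ℝ)
    + z.im • EuclideanSpace.single 1 (1:ℝ) := by
  ext j
  fin_cases j <;>
    simp [cm_apply0, cm_apply1, EuclideanSpace.single_apply, PiLp.add_apply, PiLp.smul_apply]

lemma hφder_aux (p : Polynomial ℂ) (y : EuclideanSpace ℝ (Fin 3)) :
    HasFDerivAt (fun v => cm (p.eval (ellm v)))
      (cm ∘L (((ContinuousLinearMap.smulRight (1 : ℂ →L[ℂ] ℂ)
        (p.derivative.eval (ellm y))).restrictScalars ℝ) ∘L ellm)) y :=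
  cm.hasFDerivAt.comp y
    (((p.hasDerivAt (ellm y)).hasFDerivAt.restrictScalars ℝ).comp y ellm.hasFDerivAt)

lemma hDapp_aux (p : Polynomial ℂ) (y e : EuclideanSpace ℝ (Fin 3)) :
    (cm ∘L (((ContinuousLinearMap.smulRight (1 : ℂ →L[ℂ] ℂ)
        (p.derivative.eval (ellm y))).restrictScalars ℝ) ∘L ellm)) e
      = cm (ellm e * p.derivative.eval (ellm y)) := by
  simp [smul_eq_mul]

lemma hsecond_aux (p : Polynomial ℂ) (u : EuclideanSpace ℝ (Fin 2) → ℝ)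
    (x e : EuclideanSpace ℝ (Fin 3))
    (hU : HasFDerivAt (fderiv ℝ u) (fderiv ℝ (fderiv ℝ u) (cm (p.eval (ellm x))))
      (cm (p.eval (ellm x)))) :
    fderiv ℝ (fun y => fderiv ℝ u (cm (p.eval (ellm y)))
        (cm (ellm e * p.derivative.eval (ellm y)))) x e
      = fderiv ℝ u (cm (p.eval (ellm x)))
          (cm (ellm e * (ellm e * p.derivative.derivative.eval (ellm x))))
        + fderiv ℝ (fderiv ℝ u) (cm (p.eval (ellm x)))
            (cm (ellm e * p.derivative.eval (ellm x)))
            (cm (ellm e * p.derivative.eval (ellm x))) := by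
  have hder : HasFDerivAt (fun y => p.derivative.eval (ellm y))
      (((ContinuousLinearMap.smulRight (1 : ℂ →L[ℂ] ℂ)
        (p.derivative.derivative.eval (ellm x))).restrictScalars ℝ) ∘L ellm) x :=
    ((p.derivative.hasDerivAt (ellm x)).hasFDerivAt.restrictScalars ℝ).comp x ellm.hasFDerivAt
  have part2 := cm.hasFDerivAt.comp x (hder.const_mul (ellm e))
  have h := ((hU.comp x (hφder_aux p x)).clm_apply part2).fderiv
  simp only [Function.comp_def] at h
  rw [h]
  simp [smul_eq_mul, mul_comm, mul_left_comm]

set_option maxHeartbeats 1000000 in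
/-- `φ(t, z) = p(z)` on `ℝ × ℂ ≅ ℝ³` is an `f`-harmonic morphism for
`f(t, z) = α(t)`. Here `ℂ` is identified with `ℝ²` and the coordinates on `ℝ³`
are `(t, Re z, Im z)`. -/
theorem stmt16 (p : Polynomial ℂ)
    (a : ℝ → ℝ) (ha : ContDiff ℝ (⊤ : ℕ∞) a) (hapos : ∀ t, 0 < a t)
    (φ : EuclideanSpace ℝ (Fin 3) → EuclideanSpace ℝ (Fin 2))
    (hφdef : ∀ v : EuclideanSpace ℝ (Fin 3),
      φ v 0 = (p.eval (v 1 + v 2 * Complex.I)).re ∧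
      φ v 1 = (p.eval (v 1 + v 2 * Complex.I)).im)
    (f : EuclideanSpace ℝ (Fin 3) → ℝ)
    (hfdef : ∀ v, f v = a (v 0)) :
    -- `φ` is an `f`-harmonic morphism
    ∀ V : Set (EuclideanSpace ℝ (Fin 2)), IsOpen V →
    ∀ u : EuclideanSpace ℝ (Fin 2) → ℝ, ContDiffOn ℝ 2 u V →
    (∀ y ∈ V, lap u y = 0) →
    (φ ⁻¹' V).Nonempty →
    ∀ x ∈ φ ⁻¹' V,
      f x * lap (fun y => u (φ y)) x +
        ⟪gradient f x, gradient (fun y => u (φ y)) x⟫ = 0 := by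
  classical
  obtain rfl : f = fun v => a (v 0) := funext hfdef
  obtain rfl : φ = fun v => cm (p.eval (ellm v)) := by
    funext v
    ext j
    fin_cases j
    · simpa [cm_apply0, ellm_apply] using (hφdef v).1
    · simpa [cm_apply1, ellm_apply] using (hφdef v).2
  intro V hV u hu hlapu hne x hx
  beta_reduce
  have hxV : cm (p.eval (ellm x)) ∈ V := hx
  have hcont : Continuous fun v : EuclideanSpace ℝ (Fin 3) => cm (p.eval (ellm v)) :=
    cm.continuous.comp ((p.continuous_aeval).comp ellm.continuous)
  have hopen : IsOpen ((fun v : EuclideanSpace ℝ (Fin 3) => cm (p.eval (ellm v))) ⁻¹' V) :=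
    hV.preimage hcont
  -- differentiability of u on V
  have hu1 : ∀ z ∈ V, DifferentiableAt ℝ u z := fun z hz =>
    (hu.contDiffAt (hV.mem_nhds hz)).differentiableAt (by norm_num)
  -- first derivative of the composition on the preimage
  have hgrad : ∀ y ∈ (fun v : EuclideanSpace ℝ (Fin 3) => cm (p.eval (ellm v))) ⁻¹' V,
      ∀ e, fderiv ℝ (fun v => u (cm (p.eval (ellm v)))) y e
        = fderiv ℝ u (cm (p.eval (ellm y))) (cm (ellm e * p.derivative.eval (ellm y))) := by
    intro y hy e
    have h := ((hu1 _ hy).hasFDerivAt.comp y (hφder_aux p y)).fderiv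
    simp only [Function.comp_def] at h
    rw [h, ContinuousLinearMap.comp_apply, hDapp_aux]
  -- second derivative data
  have hu2 : ContDiffAt ℝ 1 (fderiv ℝ u) (cm (p.eval (ellm x))) :=
    (hu.contDiffAt (hV.mem_nhds hxV)).fderiv_right (by norm_num)
  have hU : HasFDerivAt (fderiv ℝ u) (fderiv ℝ (fderiv ℝ u) (cm (p.eval (ellm x))))
      (cm (p.eval (ellm x))) := (hu2.differentiableAt one_ne_zero).hasFDerivAt
  set U := fderiv ℝ u (cm (p.eval (ellm x))) with hUdef
  set H := fderiv ℝ (fderiv ℝ u) (cm (p.eval (ellm x))) with hHdef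
  set dz := p.derivative.eval (ellm x) with hdz
  set d2z := p.derivative.derivative.eval (ellm x) with hd2z
  -- each Laplacian term of the composition
  have hT : ∀ i : Fin 3,
      fderiv ℝ (fun y => fderiv ℝ (fun v => u (cm (p.eval (ellm v)))) y
          (EuclideanSpace.single i 1)) x (EuclideanSpace.single i 1)
        = U (cm (ellm (EuclideanSpace.single i 1) * (ellm (EuclideanSpace.single i 1) * d2z)))
          + H (cm (ellm (EuclideanSpace.single i 1) * dz))
              (cm (ellm (EuclideanSpace.single i 1) * dz)) := by
    intro i
    have hev : (fun y => fderiv ℝ (fun v => u (cm (p.eval (ellm v)))) y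
          (EuclideanSpace.single i 1))
        =ᶠ[nhds x] fun y => fderiv ℝ u (cm (p.eval (ellm y)))
          (cm (ellm (EuclideanSpace.single i 1) * p.derivative.eval (ellm y))) := by
      filter_upwards [hopen.mem_nhds hx] with y hy
      exact hgrad y hy _
    rw [hev.fderiv_eq]
    exact hsecond_aux p u x _ hU
  -- the Laplacian of u at φ x in terms of H
  have hHi : ∀ i : Fin 2,
      fderiv ℝ (fun y => fderiv ℝ u y (EuclideanSpace.single i 1)) (cm (p.eval (ellm x)))
          (EuclideanSpace.single i 1)
        = H (EuclideanSpace.single i 1) (EuclideanSpace.single i 1) := by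
    intro i
    have h := (hU.clm_apply (hasFDerivAt_const (EuclideanSpace.single i (1:ℝ))
      (cm (p.eval (ellm x))))).fderiv
    rw [h]
    simp
  have hlapu0 : H (EuclideanSpace.single 0 1) (EuclideanSpace.single 0 1)
      + H (EuclideanSpace.single 1 1) (EuclideanSpace.single 1 1) = 0 := by
    have h := hlapu _ hxV
    simp only [lap, Fin.sum_univ_two] at h
    rw [hHi 0, hHi 1] at h
    exact h
  -- bilinear expansion
  have expand : ∀ z : ℂ, H (cm z) (cm z)
      = z.re^2 * H (EuclideanSpace.single 0 1) (EuclideanSpace.single 0 1)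
        + z.re * z.im * H (EuclideanSpace.single 0 1) (EuclideanSpace.single 1 1)
        + z.im * z.re * H (EuclideanSpace.single 1 1) (EuclideanSpace.single 0 1)
        + z.im^2 * H (EuclideanSpace.single 1 1) (EuclideanSpace.single 1 1) := by
    intro z
    rw [cm_decomp]
    simp only [map_add, map_smul, ContinuousLinearMap.add_apply,
      ContinuousLinearMap.coe_smul', Pi.smul_apply, smul_eq_mul]
    ring
  -- Laplacian of the composition vanishes
  have hlapg : lap (fun v => u (cm (p.eval (ellm v)))) x = 0 := by
    simp only [lap, Fin.sum_univ_three]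
    rw [hT 0, hT 1, hT 2, ellm_single0, ellm_single1, ellm_single2]
    have hII : Complex.I * (Complex.I * d2z) = -d2z := by
      rw [← mul_assoc, Complex.I_mul_I, neg_one_mul]
    rw [hII]
    simp only [zero_mul, map_zero, one_mul, add_zero, zero_add, map_neg]
    rw [expand dz, expand (Complex.I * dz)]
    simp only [Complex.mul_re, Complex.mul_im, Complex.I_re, Complex.I_im]
    set A := H (EuclideanSpace.single 0 1) (EuclideanSpace.single 0 1) with hA
    set B := H (EuclideanSpace.single 0 1) (EuclideanSpace.single 1 1) with hB
    set C := H (EuclideanSpace.single 1 1) (EuclideanSpace.single 0 1) with hC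
    set D := H (EuclideanSpace.single 1 1) (EuclideanSpace.single 1 1) with hD
    set q := U (cm d2z) with hq
    set s := dz.re with hs
    set t := dz.im with ht
    linear_combination (s^2 + t^2) * hlapu0
  -- the gradient term vanishes
  have hgd : fderiv ℝ (fun v => u (cm (p.eval (ellm v)))) x (EuclideanSpace.single 0 1) = 0 := by
    rw [hgrad x hx, ellm_single0, zero_mul, map_zero, map_zero]
  have hinner : ⟪gradient (fun v : EuclideanSpace ℝ (Fin 3) => a (v 0)) x,
      gradient (fun v => u (cm (p.eval (ellm v)))) x⟫ = 0 := by
    simp only [gradient]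
    rw [InnerProductSpace.toDual_symm_apply]
    have hproj : HasFDerivAt (fun v : EuclideanSpace ℝ (Fin 3) => v 0)
        (EuclideanSpace.proj 0 : EuclideanSpace ℝ (Fin 3) →L[ℝ] ℝ) x :=
      (EuclideanSpace.proj (0 : Fin 3) :
        EuclideanSpace ℝ (Fin 3) →L[ℝ] ℝ).hasFDerivAt (x := x)
    have hf' : HasFDerivAt (fun v : EuclideanSpace ℝ (Fin 3) => a (v 0))
        ((deriv a (x 0)) • (EuclideanSpace.proj 0 : EuclideanSpace ℝ (Fin 3) →L[ℝ] ℝ)) x := by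
      exact (ha.differentiable (by simp) (x 0)).hasDerivAt.comp_hasFDerivAt x hproj
    rw [hf'.fderiv]
    have h0 : ((InnerProductSpace.toDual ℝ _).symm
        (fderiv ℝ (fun v => u (cm (p.eval (ellm v)))) x)) 0 = 0 := by
      have h1 : ⟪((InnerProductSpace.toDual ℝ _).symm
          (fderiv ℝ (fun v => u (cm (p.eval (ellm v)))) x)),
          EuclideanSpace.single 0 (1:ℝ)⟫
            = fderiv ℝ (fun v => u (cm (p.eval (ellm v)))) x (EuclideanSpace.single 0 1) :=
        InnerProductSpace.toDual_symm_apply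
      rw [EuclideanSpace.inner_single_right, hgd] at h1
      simpa using h1
    simp [h0]
  rw [hlapg, hinner]
  ring
end
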